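/- arXiv:2006.02192 — 9 statements merged into one kernel-verified Lean document; each statement's English description precedes it below -/
import Mathlib

section
/- Let D_1, …, D_n be closed disks in the plane ℝ² with radii r_1, …, r_n. Assume the collection is non-separable, i.e., every line that intersects the convex hull of D_1 ∪ … ∪ D_n meets at least one of the disks D_i. Then there exists a closed disk of radius r_1 + … + r_n containing D_1 ∪ … ∪ D_n. -/
open Real
open scoped RealInnerProductSpace


lemma multiset_exists_min {α : Type*} (f : α → ℝ) (s : Multiset α) (hs : s ≠ 0) :
    ∃ p ∈ s, ∀ q ∈ s, f p ≤ f q := by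
  induction s using Multiset.induction with
  | empty => simp at hs
  | cons a s ih =>
    rcases eq_or_ne s 0 with rfl | h
    · exact ⟨a, by simp, by simp⟩
    · obtain ⟨p, hp, hmin⟩ := ih h
      rcases le_total (f a) (f p) with h1 | h1
      · refine ⟨a, Multiset.mem_cons_self _ _, ?_⟩
        intro q hq
        rcases Multiset.mem_cons.1 hq with rfl | hq
        · rfl
        · exact h1.trans (hmin q hq)
      · exact ⟨p, Multiset.mem_cons_of_mem hp, fun q hq => by
          rcases Multiset.mem_cons.1 hq with rfl | hq
          · exact h1
          · exact hmin q hq⟩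


lemma oneD_arith (Rs As w1 w2 mm1 mm2 : ℝ) (hRs : 0 ≤ Rs)
    (h1 : |Rs * mm1 - As| ≤ Rs * (Rs - mm2)) (hd : |w1 - mm1| ≤ mm2 - w2) :
    |Rs * w1 - As| ≤ Rs * (Rs - w2) := by
  have t2 := abs_sub_le (Rs * w1) (Rs * mm1) As
  have t1 : |Rs * w1 - Rs * mm1| = Rs * |w1 - mm1| := by
    rw [← mul_sub, abs_mul, abs_of_nonneg hRs]
  nlinarith [mul_le_mul_of_nonneg_left hd hRs]

lemma oneD : ∀ (N : ℕ) (s : Multiset (ℝ × ℝ)), s.card ≤ N →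
    (∀ p ∈ s, 0 ≤ p.2) →
    (∀ t : ℝ, (∃ p ∈ s, p.1 - p.2 ≤ t) → (∃ p ∈ s, t ≤ p.1 + p.2) →
      ∃ p ∈ s, |t - p.1| ≤ p.2) →
    ∀ w ∈ s, |(Multiset.map Prod.snd s).sum * w.1 - (Multiset.map (fun p => p.2 * p.1) s).sum|
      ≤ (Multiset.map Prod.snd s).sum * ((Multiset.map Prod.snd s).sum - w.2) := by
  intro N
  induction N with
  | zero =>
    intro s hcard _ _ w hw
    have : s = 0 := Multiset.card_eq_zero.1 (Nat.le_zero.1 hcard)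
    subst this
    simp at hw
  | succ N ih =>
    intro s hcard hr hcov w hw
    obtain ⟨p, hp, hpmin⟩ := multiset_exists_min (fun p => p.1 - p.2) s (by
      intro h0; rw [h0] at hw; simp at hw)
    obtain ⟨s', rfl⟩ := Multiset.exists_cons_of_mem hp
    rcases eq_or_ne s' 0 with rfl | hs'
    · rcases Multiset.mem_cons.1 hw with rfl | hw0
      · simp
      · simp at hw0
    by_cases hex : ∃ q ∈ s', |p.1 - q.1| ≤ p.2 + q.2
    · obtain ⟨q, hq, hpq⟩ := hex
      obtain ⟨u, rfl⟩ := Multiset.exists_cons_of_mem hq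
      have hp2 : 0 ≤ p.2 := hr p hp
      have hq2 : 0 ≤ q.2 := hr q (Multiset.mem_cons_of_mem (Multiset.mem_cons_self q u))
      set m1 : ℝ := if p.2 + q.2 = 0 then p.1 else (p.2 * p.1 + q.2 * q.1) / (p.2 + q.2)
        with hm1def
      have key : |p.1 - m1| ≤ q.2 ∧ |q.1 - m1| ≤ p.2 ∧
          (p.2 + q.2) * m1 = p.2 * p.1 + q.2 * q.1 := by
        rcases eq_or_lt_of_le (by linarith : (0:ℝ) ≤ p.2 + q.2) with hz | hpos
        · have hp0 : p.2 = 0 := by linarith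
          have hq0 : q.2 = 0 := by linarith
          have h01 : p.1 = q.1 := by
            have h' := hpq
            rw [hp0, hq0] at h'
            have := abs_nonneg (p.1 - q.1)
            have : |p.1 - q.1| = 0 := by linarith
            have := abs_eq_zero.1 this
            linarith
          have hm1 : m1 = p.1 := by rw [hm1def, if_pos hz.symm]
          refine ⟨by simp [hm1, hq0], by simp [hm1, h01, hp0], by rw [hp0, hq0]; ring⟩
        · have hne : p.2 + q.2 ≠ 0 := hpos.ne'
          have hm1 : m1 = (p.2 * p.1 + q.2 * q.1) / (p.2 + q.2) := by
            rw [hm1def, if_neg hne]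
          have e1 : p.1 - m1 = q.2 * (p.1 - q.1) / (p.2 + q.2) := by
            rw [hm1]; field_simp; ring
          have e2 : q.1 - m1 = p.2 * (q.1 - p.1) / (p.2 + q.2) := by
            rw [hm1]; field_simp; ring
          refine ⟨?_, ?_, by rw [hm1]; field_simp⟩
          · rw [e1, abs_div, abs_mul, abs_of_nonneg hq2, abs_of_pos hpos, div_le_iff₀ hpos]
            exact mul_le_mul_of_nonneg_left hpq hq2
          · rw [e2, abs_div, abs_mul, abs_of_nonneg hp2, abs_of_pos hpos, div_le_iff₀ hpos]
            calc p.2 * |q.1 - p.1| = p.2 * |p.1 - q.1| := by rw [abs_sub_comm]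
              _ ≤ p.2 * (p.2 + q.2) := mul_le_mul_of_nonneg_left hpq hp2
      obtain ⟨hmp, hmq, hm2⟩ := key
      set m : ℝ × ℝ := (m1, p.2 + q.2) with hm
      set tt := m ::ₘ u with htt
      have hcard' : tt.card ≤ N := by
        simp only [htt, Multiset.card_cons] at hcard ⊢
        omega
      have hr' : ∀ x ∈ tt, 0 ≤ x.2 := by
        intro x hx
        rcases Multiset.mem_cons.1 hx with rfl | hx
        · simp only [hm]; linarith
        · exact hr x (Multiset.mem_cons_of_mem (Multiset.mem_cons_of_mem hx))
      have hcov' : ∀ t : ℝ, (∃ x ∈ tt, x.1 - x.2 ≤ t) → (∃ x ∈ tt, t ≤ x.1 + x.2) →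
          ∃ x ∈ tt, |t - x.1| ≤ x.2 := by
        intro t0 hlow hup
        by_cases hmc : |t0 - m1| ≤ p.2 + q.2
        · exact ⟨m, Multiset.mem_cons_self _ _, hmc⟩
        push_neg at hmc
        have hlow' : ∃ x ∈ p ::ₘ q ::ₘ u, x.1 - x.2 ≤ t0 := by
          obtain ⟨x, hx, hxle⟩ := hlow
          rcases Multiset.mem_cons.1 hx with rfl | hx
          · refine ⟨p, Multiset.mem_cons_self _ _, ?_⟩
            simp only [hm] at hxle
            rcases abs_cases (t0 - m1) with ⟨he, _⟩ | ⟨he, _⟩ <;>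
              rcases abs_cases (p.1 - m1) with ⟨h2, _⟩ | ⟨h2, _⟩ <;> linarith
          · exact ⟨x, Multiset.mem_cons_of_mem (Multiset.mem_cons_of_mem hx), hxle⟩
        have hup' : ∃ x ∈ p ::ₘ q ::ₘ u, t0 ≤ x.1 + x.2 := by
          obtain ⟨x, hx, hxle⟩ := hup
          rcases Multiset.mem_cons.1 hx with rfl | hx
          · refine ⟨p, Multiset.mem_cons_self _ _, ?_⟩
            simp only [hm] at hxle
            rcases abs_cases (t0 - m1) with ⟨he, _⟩ | ⟨he, _⟩ <;>
              rcases abs_cases (p.1 - m1) with ⟨h2, _⟩ | ⟨h2, _⟩ <;> linarith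
          · exact ⟨x, Multiset.mem_cons_of_mem (Multiset.mem_cons_of_mem hx), hxle⟩
        obtain ⟨x, hx, hxc⟩ := hcov t0 hlow' hup'
        rcases Multiset.mem_cons.1 hx with rfl | hx
        · exact absurd hxc (by have := abs_sub_le t0 x.1 m1; push_neg; linarith [hmp])
        rcases Multiset.mem_cons.1 hx with rfl | hx
        · exact absurd hxc (by have := abs_sub_le t0 x.1 m1; push_neg; linarith [hmq])
        · exact ⟨x, Multiset.mem_cons_of_mem hx, hxc⟩
      have hsum2 : (Multiset.map Prod.snd tt).sum
          = (Multiset.map Prod.snd (p ::ₘ q ::ₘ u)).sum := by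
        simp only [htt, hm, Multiset.map_cons, Multiset.sum_cons]
        ring
      have hsum1 : (Multiset.map (fun p => p.2 * p.1) tt).sum
          = (Multiset.map (fun p => p.2 * p.1) (p ::ₘ q ::ₘ u)).sum := by
        simp only [htt, hm, Multiset.map_cons, Multiset.sum_cons]
        linarith [hm2]
      have IH := ih tt hcard' hr' hcov'
      have hRs0 : 0 ≤ (Multiset.map Prod.snd (p ::ₘ q ::ₘ u)).sum := by
        apply Multiset.sum_nonneg
        intro x hx
        obtain ⟨y, hy, rfl⟩ := Multiset.mem_map.1 hx
        exact hr y hy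
      rcases Multiset.mem_cons.1 hw with heq | hw1
      · rw [heq]
        have h1 := IH m (Multiset.mem_cons_self _ _)
        rw [hsum2, hsum1] at h1
        exact oneD_arith _ _ _ _ _ _ hRs0 h1 (by simp only [hm]; linarith [hmp])
      rcases Multiset.mem_cons.1 hw1 with heq | hw2
      · rw [heq]
        have h1 := IH m (Multiset.mem_cons_self _ _)
        rw [hsum2, hsum1] at h1
        exact oneD_arith _ _ _ _ _ _ hRs0 h1 (by simp only [hm]; linarith [hmq])
      · have h1 := IH w (Multiset.mem_cons_of_mem hw2)
        rw [hsum2, hsum1] at h1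
        exact h1
    · exfalso
      push_neg at hex
      obtain ⟨q', hq', hq'min⟩ := multiset_exists_min (fun p => p.1 - p.2) s' hs'
      have hq'2 : 0 ≤ q'.2 := hr q' (Multiset.mem_cons_of_mem hq')
      have hp2 : 0 ≤ p.2 := hr p hp
      have hple : p.1 - p.2 ≤ q'.1 - q'.2 := hpmin q' (Multiset.mem_cons_of_mem hq')
      have hgap : p.1 + p.2 < q'.1 - q'.2 := by
        have := hex q' hq'
        rcases abs_cases (p.1 - q'.1) with ⟨he, _⟩ | ⟨he, _⟩ <;> rw [he] at this <;> linarith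
      set t0 : ℝ := ((p.1 + p.2) + (q'.1 - q'.2)) / 2 with ht0
      obtain ⟨w', hw', hcw'⟩ := hcov t0 ⟨p, hp, by simp only [ht0]; linarith⟩
        ⟨q', Multiset.mem_cons_of_mem hq', by simp only [ht0]; linarith⟩
      rcases abs_le.1 hcw' with ⟨hc1, hc2⟩
      rcases Multiset.mem_cons.1 hw' with rfl | hw's
      · linarith
      · have := hq'min w' hw's
        linarith


lemma seg_inner {E : Type*} [NormedAddCommGroup E] [InnerProductSpace ℝ E]
    {K : Set E} (hK : Convex ℝ K) {x y : E} (hx : x ∈ K) (hy : y ∈ K)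
    (v : E) {t : ℝ} (h1 : ⟪x, v⟫ ≤ t) (h2 : t ≤ ⟪y, v⟫) :
    ∃ w ∈ K, ⟪w, v⟫ = t := by
  rcases eq_or_lt_of_le (h1.trans h2) with he | hlt
  · exact ⟨x, hx, le_antisymm h1 (he ▸ h2)⟩
  · set X := ⟪x, v⟫ with hX
    set Y := ⟪y, v⟫ with hY
    have hd : 0 < Y - X := sub_pos.2 hlt
    set b : ℝ := (t - X) / (Y - X) with hb
    have hb0 : 0 ≤ b := div_nonneg (by linarith) (by linarith)
    have hb1 : b ≤ 1 := by rw [hb, div_le_one hd]; linarith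
    have ha0 : (0:ℝ) ≤ 1 - b := by linarith
    refine ⟨(1-b) • x + b • y, hK hx hy ha0 hb0 (by ring), ?_⟩
    have hbd : b * (Y - X) = t - X := by rw [hb]; field_simp
    rw [inner_add_left, real_inner_smul_left, real_inner_smul_left, ← hX, ← hY]
    nlinarith [hbd]

/-- Goodman–Goodman circle covering theorem: a non-separable finite collection of
closed disks in the plane with radii `r i` is contained in a single closed disk of
radius `∑ i, r i`. -/
theorem goodman_goodman_plane (n : ℕ)
    (c : Fin n → EuclideanSpace ℝ (Fin 2)) (r : Fin n → ℝ) (hr : ∀ i, 0 ≤ r i)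
    (hns : ∀ (v : EuclideanSpace ℝ (Fin 2)) (t : ℝ), v ≠ 0 →
      ({x | ⟪x, v⟫ = t} ∩ convexHull ℝ (⋃ i, Metric.closedBall (c i) (r i))).Nonempty →
      ∃ i, ({x | ⟪x, v⟫ = t} ∩ Metric.closedBall (c i) (r i)).Nonempty) :
    ∃ z : EuclideanSpace ℝ (Fin 2),
      (⋃ i, Metric.closedBall (c i) (r i)) ⊆ Metric.closedBall z (∑ i, r i) := by
  rcases Nat.eq_zero_or_pos n with rfl | hn
  · exact ⟨0, by simp⟩
  have hball_hull : ∀ i, Metric.closedBall (c i) (r i) ⊆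
      convexHull ℝ (⋃ i, Metric.closedBall (c i) (r i)) :=
    fun i => (Set.subset_iUnion (fun i => Metric.closedBall (c i) (r i)) i).trans
      (subset_convexHull ℝ _)
  have hconv : Convex ℝ (convexHull ℝ (⋃ i, Metric.closedBall (c i) (r i))) :=
    convex_convexHull ℝ _
  rcases eq_or_lt_of_le (Finset.sum_nonneg fun i _ => hr i) with hR0 | hRpos
  · -- total radius zero
    have hri : ∀ i, r i = 0 := fun i =>
      (Finset.sum_eq_zero_iff_of_nonneg (fun i _ => hr i)).1 hR0.symm i (Finset.mem_univ i)
    set i0 : Fin n := ⟨0, hn⟩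
    have hceq : ∀ i, c i = c i0 := by
      by_contra hne
      push_neg at hne
      obtain ⟨i, hi⟩ := hne
      set v := c i - c i0 with hv
      have hvne : v ≠ 0 := sub_ne_zero.2 hi
      have hvv : 0 < ⟪v, v⟫ := by
        rw [real_inner_self_eq_norm_mul_norm]
        have := norm_pos_iff.2 hvne
        positivity
      set a : Fin n → ℝ := fun k => ⟪c k, v⟫ with ha
      have hane : a i ≠ a i0 := by
        have hkey : a i - a i0 = ⟪v, v⟫ := by
          simp only [ha]
          rw [hv, inner_sub_left]
        intro h
        rw [h, sub_self] at hkey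
        linarith
      set S : Finset ℝ := Finset.univ.image a with hS
      have hSne : S.Nonempty := ⟨a i0, Finset.mem_image_of_mem _ (Finset.mem_univ i0)⟩
      set m' := S.min' hSne with hm'
      have hmem : ∀ k, a k ∈ S := fun k => Finset.mem_image_of_mem _ (Finset.mem_univ k)
      have hlt : m' < S.max' hSne := by
        rcases ne_iff_lt_or_gt.1 hane with h | h
        · exact lt_of_le_of_lt (S.min'_le _ (hmem i)) (lt_of_lt_of_le h (S.le_max' _ (hmem i0)))
        · exact lt_of_le_of_lt (S.min'_le _ (hmem i0)) (lt_of_lt_of_le h (S.le_max' _ (hmem i)))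
      set S' : Finset ℝ := S.filter (fun x => m' < x) with hS'
      have hS'ne : S'.Nonempty := ⟨S.max' hSne, Finset.mem_filter.2 ⟨S.max'_mem hSne, hlt⟩⟩
      set s0 := S'.min' hS'ne with hs0
      have hm's0 : m' < s0 := (Finset.mem_filter.1 (S'.min'_mem hS'ne)).2
      set t : ℝ := (m' + s0) / 2 with ht
      have htm : m' < t := by rw [ht]; linarith
      have hts : t < s0 := by rw [ht]; linarith
      have hat : ∀ k, a k ≠ t := by
        intro k
        rcases eq_or_lt_of_le (S.min'_le _ (hmem k)) with h | h
        · rw [← h]; exact ne_of_lt htm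
        · have : a k ∈ S' := Finset.mem_filter.2 ⟨hmem k, h⟩
          have := S'.min'_le _ this
          exact fun hk => absurd hts (by rw [← hk]; linarith)
      -- points attaining m' and s0
      obtain ⟨k0, _, hk0⟩ := Finset.mem_image.1 (S.min'_mem hSne)
      obtain ⟨k1, _, hk1⟩ := Finset.mem_image.1 ((Finset.mem_filter.1 (S'.min'_mem hS'ne)).1)
      have hc0 : c k0 ∈ convexHull ℝ (⋃ i, Metric.closedBall (c i) (r i)) :=
        hball_hull k0 (Metric.mem_closedBall_self (hr k0))
      have hc1 : c k1 ∈ convexHull ℝ (⋃ i, Metric.closedBall (c i) (r i)) :=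
        hball_hull k1 (Metric.mem_closedBall_self (hr k1))
      obtain ⟨w, hwK, hwt⟩ := seg_inner (t := t) hconv hc0 hc1 v
        (by show ⟪c k0, v⟫ ≤ t; rw [show ⟪c k0, v⟫ = m' from hk0]; exact le_of_lt htm)
        (by show t ≤ ⟪c k1, v⟫; rw [show ⟪c k1, v⟫ = s0 from hk1]; exact le_of_lt hts)
      obtain ⟨k, y, hyt, hyb⟩ := hns v t hvne ⟨w, hwt, hwK⟩
      rw [hri k] at hyb
      have hyc : y = c k := by
        have := Metric.mem_closedBall.1 hyb
        have := dist_le_zero.1 this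
        exact this
      exact hat k (by show ⟪c k, v⟫ = t; rw [← hyc]; exact hyt)
    refine ⟨c i0, ?_⟩
    intro x hx
    simp only [Set.mem_iUnion] at hx
    obtain ⟨i, hxi⟩ := hx
    rw [hri i] at hxi
    have hxc : x = c i := dist_le_zero.1 (Metric.mem_closedBall.1 hxi)
    rw [Metric.mem_closedBall, hxc, hceq i, ← hR0, dist_self]
  · -- main case: positive total radius
    set R : ℝ := ∑ i, r i with hR
    set z : EuclideanSpace ℝ (Fin 2) := R⁻¹ • ∑ i, r i • c i with hz
    have hzR : ∑ i, r i • c i = R • z := by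
      rw [hz, smul_inv_smul₀ (ne_of_gt hRpos)]
    have hdist : ∀ j, dist (c j) z ≤ R - r j := by
      intro j
      by_cases hj : c j = z
      · rw [hj, dist_self]
        have : r j ≤ R := Finset.single_le_sum (fun i _ => hr i) (Finset.mem_univ j)
        linarith
      · set v : EuclideanSpace ℝ (Fin 2) := c j - z with hv
        have hvne : v ≠ 0 := sub_ne_zero.2 hj
        have hvn : 0 < ‖v‖ := norm_pos_iff.2 hvne
        set vh : EuclideanSpace ℝ (Fin 2) := ‖v‖⁻¹ • v with hvh
        have hvh1 : ‖vh‖ = 1 := norm_smul_inv_norm hvne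
        have hvhne : vh ≠ 0 := by
          intro h; rw [h, norm_zero] at hvh1; exact one_ne_zero hvh1.symm
        have hvhv : ⟪vh, vh⟫ = 1 := by
          rw [real_inner_self_eq_norm_mul_norm, hvh1]; norm_num
        set a : Fin n → ℝ := fun k => ⟪c k, vh⟫ with ha
        set s : Multiset (ℝ × ℝ) := Multiset.map (fun k => (a k, r k)) Finset.univ.val
          with hsdef
        have hcard : s.card ≤ n := by
          rw [hsdef, Multiset.card_map]
          simp
        have hr' : ∀ p ∈ s, 0 ≤ p.2 := by
          intro p hp
          obtain ⟨k, _, rfl⟩ := Multiset.mem_map.1 hp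
          exact hr k
        have hcov : ∀ t : ℝ, (∃ p ∈ s, p.1 - p.2 ≤ t) → (∃ p ∈ s, t ≤ p.1 + p.2) →
            ∃ p ∈ s, |t - p.1| ≤ p.2 := by
          intro t hlow hup
          obtain ⟨pl, hpl, hplle⟩ := hlow
          obtain ⟨kl, _, rfl⟩ := Multiset.mem_map.1 hpl
          obtain ⟨pu, hpu, hpule⟩ := hup
          obtain ⟨ku, _, rfl⟩ := Multiset.mem_map.1 hpu
          set xl : EuclideanSpace ℝ (Fin 2) := c kl - r kl • vh with hxl
          set xu : EuclideanSpace ℝ (Fin 2) := c ku + r ku • vh with hxu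
          have hxlb : xl ∈ Metric.closedBall (c kl) (r kl) := by
            rw [Metric.mem_closedBall, dist_eq_norm, hxl]
            simp only [sub_sub_cancel_left, norm_neg, norm_smul, hvh1]
            rw [Real.norm_eq_abs, abs_of_nonneg (hr kl)]
            simp
          have hxub : xu ∈ Metric.closedBall (c ku) (r ku) := by
            rw [Metric.mem_closedBall, dist_eq_norm, hxu]
            simp only [add_sub_cancel_left, norm_smul, hvh1]
            rw [Real.norm_eq_abs, abs_of_nonneg (hr ku)]
            simp
          have hxli : ⟪xl, vh⟫ = a kl - r kl := by
            rw [hxl, inner_sub_left, real_inner_smul_left, hvhv, ha]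
            ring
          have hxui : ⟪xu, vh⟫ = a ku + r ku := by
            rw [hxu, inner_add_left, real_inner_smul_left, hvhv, ha]
            ring
          obtain ⟨w, hwK, hwt⟩ := seg_inner (t := t) hconv (hball_hull kl hxlb)
            (hball_hull ku hxub) vh
            (by rw [hxli]; simpa using hplle) (by rw [hxui]; simpa using hpule)
          obtain ⟨k, y, hyt, hyb⟩ := hns vh t hvhne ⟨w, hwt, hwK⟩
          refine ⟨(a k, r k), Multiset.mem_map.2 ⟨k, by simp, rfl⟩, ?_⟩
          have h1 : t - a k = ⟪y - c k, vh⟫ := by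
            rw [inner_sub_left, ← hyt, ha]
          have h2 : ‖y - c k‖ ≤ r k := by
            rw [← dist_eq_norm]
            exact Metric.mem_closedBall.1 hyb
          rw [h1]
          calc |⟪y - c k, vh⟫| ≤ ‖y - c k‖ * ‖vh‖ := abs_real_inner_le_norm _ _
            _ ≤ r k := by rw [hvh1]; simpa using h2
        have hmain := oneD n s hcard hr' hcov (a j, r j)
          (Multiset.mem_map.2 ⟨j, by simp, rfl⟩)
        have e1 : (Multiset.map Prod.snd s).sum = R := by
          rw [hsdef, Multiset.map_map, hR]
          rfl
        have e2 : (Multiset.map (fun p => p.2 * p.1) s).sum = ∑ k, r k * a k := by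
          rw [hsdef, Multiset.map_map]
          rfl
        rw [e1, e2] at hmain
        have e3 : ∑ k, r k * a k = R * ⟪z, vh⟫ := by
          have : ⟪∑ k, r k • c k, vh⟫ = ∑ k, r k * ⟪c k, vh⟫ := by
            rw [sum_inner]
            exact Finset.sum_congr rfl fun k _ => real_inner_smul_left _ _ _
          rw [← this, hzR, real_inner_smul_left]
        have e4 : ⟪c j - z, vh⟫ = ‖v‖ := by
          rw [hvh, real_inner_smul_right, ← hv, real_inner_self_eq_norm_mul_norm]
          field_simp
        have e5 : R * (a j) - R * ⟪z, vh⟫ = R * ‖v‖ := by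
          rw [← e4, inner_sub_left, ha]
          ring
        rw [e3] at hmain
        rw [e5] at hmain
        rw [abs_of_nonneg (by positivity : (0:ℝ) ≤ R * ‖v‖)] at hmain
        have : ‖v‖ ≤ R - r j := by
          have := (mul_le_mul_iff_right₀ hRpos).1 hmain
          exact this
        rw [dist_eq_norm, ← hv]
        exact this
    refine ⟨z, Set.iUnion_subset fun j => Metric.closedBall_subset_closedBall' ?_⟩
    have := hdist j
    linarith
end

section
/- Let B_1, …, B_n be closed balls in ℝ^d with radii r_1, …, r_n. Assume the collection is non-separable, i.e., every hyperplane that intersects the convex hull of B_1 ∪ … ∪ B_n meets at least one of the balls B_i. Then there exists a closed ball of radius r_1 + … + r_n containing B_1 ∪ … ∪ B_n. -/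
open Real
open scoped RealInnerProductSpace

lemma oneD_s2 {n : ℕ} (a r : Fin n → ℝ) :
    ∀ S : Finset (Fin n), ∀ M : ℝ, (∀ i ∈ S, 0 ≤ r i) →
    (∀ t : ℝ, t < M → (∃ i ∈ S, a i - r i ≤ t) →
      ∃ i ∈ S, a i - r i ≤ t ∧ t ≤ a i + r i) →
    ∑ i ∈ S, r i * (M - a i) ≤ (∑ i ∈ S, r i) ^ 2 := by
  intro S
  induction S using Finset.strongInduction with
  | _ S IH =>
    intro M hr hcov
    rcases S.eq_empty_or_nonempty with rfl | hSne
    · simp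
    by_cases hj : ∃ j ∈ S, M ≤ a j + r j ∧ a j - r j ≤ M
    · obtain ⟨j, hjS, hjM, hjM'⟩ := hj
      have hrj : 0 ≤ r j := hr j hjS
      set S' := S.erase j with hS'
      have hsub : S' ⊂ S := Finset.erase_ssubset hjS
      have hr' : ∀ i ∈ S', 0 ≤ r i := fun i hi => hr i (Finset.mem_of_mem_erase hi)
      have hcov' : ∀ t : ℝ, t < a j - r j → (∃ i ∈ S', a i - r i ≤ t) →
          ∃ i ∈ S', a i - r i ≤ t ∧ t ≤ a i + r i := by
        rintro t ht ⟨k, hkS', hk⟩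
        have htM : t < M := lt_of_lt_of_le ht hjM'
        obtain ⟨i, hiS, h1, h2⟩ := hcov t htM ⟨k, Finset.mem_of_mem_erase hkS', hk⟩
        refine ⟨i, Finset.mem_erase.mpr ⟨?_, hiS⟩, h1, h2⟩
        rintro rfl
        exact absurd h1 (not_le.mpr ht)
      have IH' := IH S' hsub (a j - r j) hr' hcov'
      have hRne : 0 ≤ ∑ i ∈ S', r i := Finset.sum_nonneg hr'
      have hsplit1 : r j * (M - a j) + ∑ i ∈ S', r i * (M - a i) = ∑ i ∈ S, r i * (M - a i) :=
        Finset.add_sum_erase S (fun i => r i * (M - a i)) hjS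
      have hsplit2 : r j + ∑ i ∈ S', r i = ∑ i ∈ S, r i := Finset.add_sum_erase S (fun i => r i) hjS
      have hdecomp : ∑ i ∈ S', r i * (M - a i)
          = (M - (a j - r j)) * ∑ i ∈ S', r i + ∑ i ∈ S', r i * ((a j - r j) - a i) := by
        rw [Finset.mul_sum, ← Finset.sum_add_distrib]
        exact Finset.sum_congr rfl fun i _ => by ring
      have h1 : r j * (M - a j) ≤ r j * r j :=
        mul_le_mul_of_nonneg_left (by linarith) hrj
      have h2 : (M - (a j - r j)) * ∑ i ∈ S', r i ≤ (2 * r j) * ∑ i ∈ S', r i :=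
        mul_le_mul_of_nonneg_right (by linarith) hRne
      nlinarith [IH', h1, h2, hsplit1, hsplit2, hdecomp]
    · push_neg at hj
      by_cases hlow : ∃ i ∈ S, a i - r i ≤ M
      · exfalso
        obtain ⟨i₀, hi₀S, hi₀⟩ := hlow
        have hi₀M : a i₀ + r i₀ < M := by
          by_contra h
          exact absurd hi₀ (not_le.mpr (hj i₀ hi₀S (not_lt.mp h)))
        set T := S.filter (fun i => a i + r i < M) with hT
        have hi₀T : i₀ ∈ T := Finset.mem_filter.mpr ⟨hi₀S, hi₀M⟩
        have hTne : T.Nonempty := ⟨i₀, hi₀T⟩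
        set β := T.sup' hTne (fun i => a i + r i) with hβ
        have hβM : β < M := by
          apply (Finset.sup'_lt_iff hTne).mpr
          intro i hi
          exact (Finset.mem_filter.mp hi).2
        have hβt : β < (β + M) / 2 := by linarith
        have htM : (β + M) / 2 < M := by linarith
        have hguard : a i₀ - r i₀ ≤ (β + M) / 2 := by
          have h3 : a i₀ + r i₀ ≤ β := Finset.le_sup' (fun i => a i + r i) hi₀T
          have h4 := hr i₀ hi₀S
          linarith
        obtain ⟨i, hiS, h1, h2⟩ := hcov ((β + M) / 2) htM ⟨i₀, hi₀S, hguard⟩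
        by_cases hc : a i + r i < M
        · have : a i + r i ≤ β := Finset.le_sup' (fun i => a i + r i) (Finset.mem_filter.mpr ⟨hiS, hc⟩)
          linarith
        · have := hj i hiS (not_lt.mp hc)
          linarith
      · push_neg at hlow
        have hle : ∑ i ∈ S, r i * (M - a i) ≤ 0 := by
          apply Finset.sum_nonpos
          intro i hi
          have h1 := hlow i hi
          have h2 := hr i hi
          nlinarith
        nlinarith [hle, sq_nonneg (∑ i ∈ S, r i)]


/-- High-dimensional Goodman–Goodman theorem: a non-separable finite collection of
closed balls in `ℝ^d` with radii `r i` is contained in a single closed ball of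
radius `∑ i, r i`. -/
theorem goodman_goodman (d n : ℕ)
    (c : Fin n → EuclideanSpace ℝ (Fin d)) (r : Fin n → ℝ) (hr : ∀ i, 0 ≤ r i)
    (hns : ∀ (v : EuclideanSpace ℝ (Fin d)) (t : ℝ), v ≠ 0 →
      ({x | ⟪x, v⟫ = t} ∩ convexHull ℝ (⋃ i, Metric.closedBall (c i) (r i))).Nonempty →
      ∃ i, ({x | ⟪x, v⟫ = t} ∩ Metric.closedBall (c i) (r i)).Nonempty) :
    ∃ z : EuclideanSpace ℝ (Fin d),
      (⋃ i, Metric.closedBall (c i) (r i)) ⊆ Metric.closedBall z (∑ i, r i) := by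
  rcases Nat.eq_zero_or_pos n with rfl | hn
  · exact ⟨0, by simp⟩
  set U := ⋃ i, Metric.closedBall (c i) (r i) with hU
  have hcU : ∀ i, c i ∈ U := fun i =>
    Set.mem_iUnion.mpr ⟨i, Metric.mem_closedBall_self (hr i)⟩
  set R := ∑ i, r i with hR
  have hR0 : 0 ≤ R := Finset.sum_nonneg fun i _ => hr i
  rcases eq_or_lt_of_le hR0 with hR0' | hRpos
  · -- all radii zero
    have hri : ∀ i, r i = 0 := by
      intro i
      have := (Finset.sum_eq_zero_iff_of_nonneg (fun i _ => hr i)).mp hR0'.symm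
      exact this i (Finset.mem_univ i)
    set i₀ : Fin n := ⟨0, hn⟩
    have hcc : ∀ j, c j = c i₀ := by
      intro j
      by_contra hne
      set v := c j - c i₀ with hv
      have hv0 : v ≠ 0 := sub_ne_zero.mpr hne
      have hnorm : (0:ℝ) < ‖v‖ ^ 2 := pow_pos (norm_pos_iff.mpr hv0) 2
      have hlt : ⟪c i₀, v⟫ < ⟪c j, v⟫ := by
        have : ⟪c j, v⟫ - ⟪c i₀, v⟫ = ‖v‖ ^ 2 := by
          rw [← inner_sub_left, ← hv, real_inner_self_eq_norm_sq]
        linarith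
      obtain ⟨t, htIoo, htV⟩ :=
        (Set.Ioo_infinite hlt).exists_notMem_finset
          (Finset.image (fun i => ⟪c i, v⟫) Finset.univ)
      obtain ⟨ht1, ht2⟩ := htIoo
      -- point on the segment with inner product t
      set θ := (t - ⟪c i₀, v⟫) / (‖v‖ ^ 2) with hθ
      have hθ0 : 0 ≤ θ := by
        apply div_nonneg (by linarith) (le_of_lt hnorm)
      have hθ1 : θ ≤ 1 := by
        rw [div_le_one hnorm]
        have : ⟪c j, v⟫ - ⟪c i₀, v⟫ = ‖v‖ ^ 2 := by
          rw [← inner_sub_left, ← hv, real_inner_self_eq_norm_sq]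
        linarith
      set x₀ := (1 - θ) • c i₀ + θ • c j with hx₀
      have hx₀t : ⟪x₀, v⟫ = t := by
        rw [hx₀, inner_add_left, real_inner_smul_left, real_inner_smul_left]
        have hvv : ⟪c j, v⟫ = ⟪c i₀, v⟫ + ‖v‖ ^ 2 := by
          have : ⟪c j, v⟫ - ⟪c i₀, v⟫ = ‖v‖ ^ 2 := by
            rw [← inner_sub_left, ← hv, real_inner_self_eq_norm_sq]
          linarith
        rw [hvv, hθ]
        field_simp
        ring
      have hx₀hull : x₀ ∈ convexHull ℝ U :=
        (convex_convexHull ℝ U) (subset_convexHull ℝ U (hcU i₀))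
          (subset_convexHull ℝ U (hcU j)) (by linarith) hθ0 (by ring)
      obtain ⟨i, y, hy1, hy2⟩ := hns v t hv0 ⟨x₀, hx₀t, hx₀hull⟩
      have hyc : y = c i := by
        have := hy2
        rw [hri i] at this
        simpa [Metric.mem_closedBall, dist_le_zero] using this
      apply htV
      apply Finset.mem_image.mpr ⟨i, Finset.mem_univ i, ?_⟩
      rw [← hyc]
      exact hy1
    refine ⟨c i₀, ?_⟩
    intro x hx
    obtain ⟨i, hxi⟩ := Set.mem_iUnion.mp hx
    rw [hri i] at hxi
    have : x = c i := by simpa [Metric.mem_closedBall, dist_le_zero] using hxi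
    rw [Metric.mem_closedBall, this, hcc i]
    simpa using hR0
  · -- main case R > 0
    set z := R⁻¹ • ∑ i, r i • c i with hz
    refine ⟨z, ?_⟩
    intro x hx
    obtain ⟨j, hxj⟩ := Set.mem_iUnion.mp hx
    rw [Metric.mem_closedBall]
    by_cases hxz : x = z
    · rw [hxz, dist_self]; exact hR0
    · set u := x - z with hu
      have hu0 : u ≠ 0 := sub_ne_zero.mpr hxz
      set v := ‖u‖⁻¹ • u with hv
      have hv1 : ‖v‖ = 1 := norm_smul_inv_norm hu0
      have hv0 : v ≠ 0 := by
        intro h; rw [h, norm_zero] at hv1; exact one_ne_zero hv1.symm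
      set a : Fin n → ℝ := fun i => ⟪c i, v⟫ with ha
      have hne : (Finset.univ : Finset (Fin n)).Nonempty := ⟨⟨0, hn⟩, Finset.mem_univ _⟩
      set M := Finset.univ.sup' hne (fun i => a i + r i) with hM
      -- the covering hypothesis
      have hcov : ∀ t : ℝ, t < M → (∃ i ∈ Finset.univ, a i - r i ≤ t) →
          ∃ i ∈ (Finset.univ : Finset (Fin n)), a i - r i ≤ t ∧ t ≤ a i + r i := by
        rintro t ht ⟨i₀, -, hi₀⟩
        obtain ⟨i₁, -, hi₁⟩ := Finset.exists_mem_eq_sup' hne (fun i => a i + r i)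
        set p := c i₀ - r i₀ • v with hp
        set q := c i₁ + r i₁ • v with hq
        have hpU : p ∈ U := Set.mem_iUnion.mpr ⟨i₀, by
          rw [Metric.mem_closedBall, dist_eq_norm, hp]
          simp [norm_smul, hv1, abs_of_nonneg (hr i₀)]⟩
        have hqU : q ∈ U := Set.mem_iUnion.mpr ⟨i₁, by
          rw [Metric.mem_closedBall, dist_eq_norm, hq]
          simp [norm_smul, hv1, abs_of_nonneg (hr i₁)]⟩
        have hvv : ⟪v, v⟫ = 1 := by
          rw [real_inner_self_eq_norm_sq, hv1]; norm_num
        have hpv : ⟪p, v⟫ = a i₀ - r i₀ := by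
          rw [hp, inner_sub_left, real_inner_smul_left, hvv]; ring
        have hqv : ⟪q, v⟫ = M := by
          rw [hq, inner_add_left, real_inner_smul_left, hvv, hM, hi₁]; ring
        have hpq : ⟪p, v⟫ < ⟪q, v⟫ := by rw [hpv, hqv]; exact lt_of_le_of_lt hi₀ ht
        set θ := (t - ⟪p, v⟫) / (⟪q, v⟫ - ⟪p, v⟫) with hθ
        have hd : 0 < ⟪q, v⟫ - ⟪p, v⟫ := by linarith
        have hθ0 : 0 ≤ θ := div_nonneg (by rw [hpv]; linarith) (le_of_lt hd)
        have hθ1 : θ ≤ 1 := by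
          rw [div_le_one hd]
          rw [hqv]
          linarith
        set x₀ := (1 - θ) • p + θ • q with hx₀
        have hx₀t : ⟪x₀, v⟫ = t := by
          have hne' : ⟪q, v⟫ - ⟪p, v⟫ ≠ 0 := ne_of_gt hd
          rw [hx₀, inner_add_left, real_inner_smul_left, real_inner_smul_left, hθ]
          linear_combination div_mul_cancel₀ (t - ⟪p, v⟫) hne'
        have hx₀hull : x₀ ∈ convexHull ℝ U :=
          (convex_convexHull ℝ U) (subset_convexHull ℝ U hpU)
            (subset_convexHull ℝ U hqU) (by linarith) hθ0 (by ring)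
        obtain ⟨i, y, hy1, hy2⟩ := hns v t hv0 ⟨x₀, hx₀t, hx₀hull⟩
        refine ⟨i, Finset.mem_univ i, ?_, ?_⟩
        all_goals {
          have hCS : |⟪c i - y, v⟫| ≤ r i := by
            calc |⟪c i - y, v⟫| ≤ ‖c i - y‖ * ‖v‖ := abs_real_inner_le_norm _ _
              _ = ‖c i - y‖ := by rw [hv1, mul_one]
              _ ≤ r i := by
                  rw [← dist_eq_norm, dist_comm]
                  exact Metric.mem_closedBall.mp hy2
          have h2 : ⟪c i - y, v⟫ = a i - t := by
            rw [inner_sub_left, hy1]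
          rw [h2] at hCS
          have := abs_le.mp hCS
          first
          | linarith [this.1, this.2]
        }
      have key := oneD_s2 a r Finset.univ M (fun i _ => hr i) hcov
      have hsum : ∑ i, r i * (M - a i) = R * M - ∑ i, r i * a i := by
        rw [hR, Finset.sum_mul, ← Finset.sum_sub_distrib]
        exact Finset.sum_congr rfl fun i _ => by ring
      have hzv : ⟪z, v⟫ = R⁻¹ * ∑ i, r i * a i := by
        rw [hz, real_inner_smul_left, sum_inner]
        congr 1
        exact Finset.sum_congr rfl fun i _ => by rw [real_inner_smul_left]
      have hMz : M ≤ ⟪z, v⟫ + R := by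
        have hRM : R * M ≤ (∑ i, r i * a i) + R ^ 2 := by
          rw [hsum] at key; linarith
        rw [hzv]
        rw [← mul_le_mul_iff_of_pos_left hRpos]
        have : R * (R⁻¹ * ∑ i, r i * a i + R) = (∑ i, r i * a i) + R ^ 2 := by
          field_simp
        rw [this]
        exact hRM
      have hxv : ⟪x, v⟫ ≤ a j + r j := by
        have hCS : |⟪x - c j, v⟫| ≤ r j := by
          calc |⟪x - c j, v⟫| ≤ ‖x - c j‖ * ‖v‖ := abs_real_inner_le_norm _ _
            _ = ‖x - c j‖ := by rw [hv1, mul_one]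
            _ ≤ r j := by rw [← dist_eq_norm]; exact Metric.mem_closedBall.mp hxj
        have h2 : ⟪x - c j, v⟫ = ⟪x, v⟫ - a j := by rw [inner_sub_left]
        rw [h2] at hCS
        linarith [(abs_le.mp hCS).2]
      have haj : a j + r j ≤ M := Finset.le_sup' (fun i => a i + r i) (Finset.mem_univ j)
      have hnormu : ‖u‖ = ⟪u, v⟫ := by
        rw [hv, real_inner_smul_right, real_inner_self_eq_norm_mul_norm]
        have : ‖u‖ ≠ 0 := norm_ne_zero_iff.mpr hu0
        field_simp
      have huv : ⟪u, v⟫ = ⟪x, v⟫ - ⟪z, v⟫ := by rw [hu, inner_sub_left]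
      rw [dist_eq_norm, ← hu, hnormu, huv]
      linarith
end

section
/- Let Z_1, …, Z_n ⊆ S be zones of widths 2α_1, …, 2α_n respectively, with each 0 < α_i and α := α_1 + … + α_n ≤ π/2, and let u_i be a unit vector determining Z_i. Set w_i := (sin α_i)·u_i and w := w_1 + … + w_n. If |w| ≥ sin α and |w − w_i| ≤ sin(α − α_i) for every i ∈ {1, …, n}, then there exists a zone of width 2α on S containing Z_1 ∪ … ∪ Z_n. -/
open Real
open scoped RealInnerProductSpace

lemma key_ineq (s a t A B : ℝ) (hs : 0 ≤ s) (hsA : s ≤ Real.sin A)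
    (hA : 0 ≤ A) (hA2 : A ≤ π / 2) (hB : 0 ≤ B) (hAB : A + B ≤ π / 2)
    (ht : 0 < t) (hat : a ≤ t) (ha : t * Real.cos B ≤ a) :
    s * a + Real.sqrt (1 - s ^ 2) * Real.sqrt (t ^ 2 - a ^ 2) ≤ t * Real.sin (A + B) := by
  have hs1 : s ≤ 1 := hsA.trans (Real.sin_le_one A)
  have hcosB : 0 ≤ Real.cos B := Real.cos_nonneg_of_mem_Icc ⟨by linarith, by linarith⟩
  have ha0 : 0 ≤ a := le_trans (mul_nonneg ht.le hcosB) ha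
  have hat1 : a / t ≤ 1 := (div_le_one ht).2 hat
  have hat0 : 0 ≤ a / t := div_nonneg ha0 ht.le
  set β := Real.arcsin s with hβ
  set γ := Real.arccos (a / t) with hγ
  have hsinβ : Real.sin β = s := Real.sin_arcsin (by linarith) hs1
  have hcosβ : Real.cos β = Real.sqrt (1 - s ^ 2) := Real.cos_arcsin s
  have hcosγ : Real.cos γ = a / t := Real.cos_arccos (by linarith) hat1
  have hsinγ : Real.sin γ = Real.sqrt (1 - (a / t) ^ 2) := Real.sin_arccos (a / t)
  have hβ0 : 0 ≤ β := Real.arcsin_nonneg.2 hs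
  have hγ0 : 0 ≤ γ := Real.arccos_nonneg _
  have hβA : β ≤ A := by
    calc β ≤ Real.arcsin (Real.sin A) := Real.monotone_arcsin hsA
    _ = A := Real.arcsin_sin (by linarith) hA2
  have hγB : γ ≤ B := by
    have h2 : Real.arccos (Real.cos B) = B := Real.arccos_cos hB (by linarith [Real.pi_pos])
    rw [hγ, ← h2, Real.arccos_eq_pi_div_two_sub_arcsin, Real.arccos_eq_pi_div_two_sub_arcsin]
    have : Real.arcsin (Real.cos B) ≤ Real.arcsin (a / t) :=
      Real.monotone_arcsin ((le_div_iff₀ ht).2 (by linarith))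
    linarith
  have hsqrt : Real.sqrt (t ^ 2 - a ^ 2) = t * Real.sqrt (1 - (a / t) ^ 2) := by
    rw [← Real.sqrt_sq ht.le, ← Real.sqrt_mul (sq_nonneg t)]
    congr 1
    field_simp
    rw [Real.sq_sqrt (sq_nonneg t)]
  have heq : s * a + Real.sqrt (1 - s ^ 2) * Real.sqrt (t ^ 2 - a ^ 2) = t * Real.sin (β + γ) := by
    rw [Real.sin_add, hsinβ, hcosβ, hcosγ, hsinγ, hsqrt]
    field_simp
  rw [heq]
  have : Real.sin (β + γ) ≤ Real.sin (A + B) := by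
    apply Real.strictMonoOn_sin.monotoneOn ⟨by linarith, by linarith⟩ ⟨by linarith, hAB⟩
    linarith
  nlinarith

/-- Dual reformulation of Lemma 4 of Jiang–Polyanskii: if `w = ∑ i, w i`, where
`w i = sin (α i) • u i`, satisfies `‖w‖ ≥ sin α` and `‖w - w i‖ ≤ sin (α - α i)`
for all `i`, where `α = ∑ i, α i ≤ π/2`, then the zones `Z i` of half-widths `α i`
determined by the unit vectors `u i` can be covered by a single zone of half-width `α`. -/
theorem zones_coverable_of_sum_vectors (d n : ℕ)
    (u : Fin n → EuclideanSpace ℝ (Fin (d + 1))) (hu : ∀ i, ‖u i‖ = 1)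
    (α : Fin n → ℝ) (hα : ∀ i, 0 < α i) (hsum : ∑ i, α i ≤ π / 2)
    (w : Fin n → EuclideanSpace ℝ (Fin (d + 1))) (hw : ∀ i, w i = sin (α i) • u i)
    (hnorm : sin (∑ i, α i) ≤ ‖∑ i, w i‖)
    (hnear : ∀ i, ‖(∑ j, w j) - w i‖ ≤ sin ((∑ j, α j) - α i)) :
    ∃ v : EuclideanSpace ℝ (Fin (d + 1)), ‖v‖ = 1 ∧
      ∀ i, {x | ‖x‖ = 1 ∧ |⟪x, u i⟫| ≤ sin (α i)} ⊆
        {x | ‖x‖ = 1 ∧ |⟪x, v⟫| ≤ sin (∑ j, α j)} := by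
  rcases eq_or_ne n 0 with hn | hn
  · subst hn
    exact ⟨EuclideanSpace.single 0 1, by simp [EuclideanSpace.norm_single],
      fun i => i.elim0⟩
  have hne : Nonempty (Fin n) := Fin.pos_iff_nonempty.mp (Nat.pos_of_ne_zero hn)
  set A := ∑ i, α i with hA
  have hApos : 0 < A := Finset.sum_pos (fun i _ => hα i) Finset.univ_nonempty
  have hsinA : 0 < sin A := Real.sin_pos_of_pos_of_lt_pi hApos (by linarith [Real.pi_pos])
  set W : EuclideanSpace ℝ (Fin (d + 1)) := ∑ i, w i with hW
  have ht : 0 < ‖W‖ := lt_of_lt_of_le hsinA hnorm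
  refine ⟨‖W‖⁻¹ • W, ?_, ?_⟩
  · rw [norm_smul, norm_inv, norm_norm, inv_mul_cancel₀ ht.ne']
  intro i x hx
  obtain ⟨hx1, hx2⟩ := hx
  refine ⟨hx1, ?_⟩
  -- basic facts about i
  have hαi : 0 < α i := hα i
  have hαiA : α i ≤ A := Finset.single_le_sum (fun j _ => (hα j).le) (Finset.mem_univ i)
  have hB0 : 0 ≤ A - α i := by linarith
  have hB2 : A - α i ≤ π / 2 := by linarith
  have hsinB : 0 ≤ sin (A - α i) := Real.sin_nonneg_of_nonneg_of_le_pi hB0 (by linarith [Real.pi_pos])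
  have hcosB : 0 ≤ cos (A - α i) := Real.cos_nonneg_of_mem_Icc ⟨by linarith, hB2⟩
  have hcosαi : 0 ≤ cos (α i) := Real.cos_nonneg_of_mem_Icc ⟨by linarith, by linarith⟩
  have hsinαi : 0 < sin (α i) := Real.sin_pos_of_pos_of_lt_pi hαi (by linarith [Real.pi_pos])
  set c : ℝ := ⟪x, u i⟫ with hc
  set a : ℝ := ⟪u i, W⟫ with ha
  -- norm of w i
  have hwn : ‖w i‖ = sin (α i) := by
    rw [hw i, norm_smul, hu i, mul_one, Real.norm_eq_abs, abs_of_pos hsinαi]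
  have hWwi : ⟪W, w i⟫ = sin (α i) * a := by
    rw [hw i, real_inner_smul_right, real_inner_comm]
  -- squared distance
  have hsq : ‖W - w i‖ ^ 2 = ‖W‖ ^ 2 - 2 * sin (α i) * a + sin (α i) ^ 2 := by
    rw [norm_sub_sq_real, hWwi, hwn]; ring
  have hsq' : ‖W‖ ^ 2 - 2 * sin (α i) * a + sin (α i) ^ 2 ≤ sin (A - α i) ^ 2 := by
    rw [← hsq]
    have := hnear i
    nlinarith [norm_nonneg (W - w i)]
  have hsinAeq : sin A = sin (α i) * cos (A - α i) + cos (α i) * sin (A - α i) := by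
    rw [← Real.sin_add]; ring_nf
  -- lower bound on a
  have haW : ‖W‖ * cos (A - α i) ≤ a := by
    nlinarith [Real.sin_sq_add_cos_sq (α i), Real.sin_sq_add_cos_sq (A - α i),
      sq_nonneg (‖W‖ - sin (α i) * cos (A - α i) - cos (α i) * sin (A - α i)),
      mul_nonneg hcosαi hsinB, hnorm]
  have ha0 : 0 ≤ a := le_trans (mul_nonneg ht.le hcosB) haW
  have haup : a ≤ ‖W‖ := by
    have := real_inner_le_norm (u i) W
    rwa [hu i, one_mul] at this
  -- decomposition
  set y : EuclideanSpace ℝ (Fin (d + 1)) := x - c • u i with hy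
  set p : EuclideanSpace ℝ (Fin (d + 1)) := W - a • u i with hp
  have hxW : ⟪x, W⟫ = c * a + ⟪y, p⟫ := by
    have h1 : ⟪u i, u i⟫ = (1 : ℝ) := by
      rw [real_inner_self_eq_norm_sq, hu i]; norm_num
    simp only [hy, hp, inner_sub_left, inner_sub_right, real_inner_smul_left,
      real_inner_smul_right, h1]
    rw [← hc, ← ha]
    ring
  have hyn : ‖y‖ ^ 2 = 1 - c ^ 2 := by
    rw [hy, norm_sub_sq_real, real_inner_smul_right, norm_smul, hx1, hu i,
      Real.norm_eq_abs]
    rw [← hc]; ring_nf; rw [sq_abs]; ring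
  have hpn : ‖p‖ ^ 2 = ‖W‖ ^ 2 - a ^ 2 := by
    rw [hp, norm_sub_sq_real, real_inner_smul_right, norm_smul, hu i,
      Real.norm_eq_abs]
    rw [real_inner_comm, ← ha]; ring_nf; rw [sq_abs]; ring
  have hynv : ‖y‖ = Real.sqrt (1 - c ^ 2) := by
    rw [← hyn, Real.sqrt_sq (norm_nonneg y)]
  have hpnv : ‖p‖ = Real.sqrt (‖W‖ ^ 2 - a ^ 2) := by
    rw [← hpn, Real.sqrt_sq (norm_nonneg p)]
  have hyp : |⟪y, p⟫| ≤ Real.sqrt (1 - c ^ 2) * Real.sqrt (‖W‖ ^ 2 - a ^ 2) := by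
    rw [← hynv, ← hpnv]; exact abs_real_inner_le_norm y p
  have habs : |⟪x, W⟫| ≤ |c| * a + Real.sqrt (1 - c ^ 2) * Real.sqrt (‖W‖ ^ 2 - a ^ 2) := by
    calc |⟪x, W⟫| = |c * a + ⟪y, p⟫| := by rw [hxW]
    _ ≤ |c * a| + |⟪y, p⟫| := abs_add_le _ _
    _ = |c| * a + |⟪y, p⟫| := by rw [abs_mul, abs_of_nonneg ha0]
    _ ≤ _ := by linarith
  have hkey : |c| * a + Real.sqrt (1 - c ^ 2) * Real.sqrt (‖W‖ ^ 2 - a ^ 2) ≤ ‖W‖ * sin (α i + (A - α i)) := by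
    have := key_ineq |c| a ‖W‖ (α i) (A - α i) (abs_nonneg c) hx2 hαi.le (by linarith)
      hB0 (by linarith) ht haup haW
    rwa [sq_abs] at this
  have hfin : |⟪x, W⟫| ≤ ‖W‖ * sin A := by
    have : α i + (A - α i) = A := by ring
    rw [this] at hkey
    linarith
  -- conclude
  show |⟪x, ‖W‖⁻¹ • W⟫| ≤ sin A
  rw [real_inner_smul_right, abs_mul, abs_inv, abs_norm]
  rw [inv_mul_le_iff₀ ht]
  linarith [hfin]
end

section
/- Let D_1, …, D_n be closed spherical caps on the unit d-sphere S with centers p_1, …, p_n ∈ S and spherical radii α_1, …, α_n ∈ (0, π/2), and let D_i' denote the open spherical cap of radius π/2 − α_i centered at p_i. If the collection {D_1, …, D_n} is non-separable (no great sphere avoiding all caps divides the collection into two nonempty subcollections lying in the two open half-spaces), then for every choice of signs ε_1, …, ε_n ∈ {+1, −1} that are not all equal, the intersection (ε_1 D_1') ∩ … ∩ (ε_n D_n') is empty, where (+1)D_i' = D_i' and (−1)D_i' = −D_i' is the antipodal cap of D_i'. -/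
open Real
open scoped RealInnerProductSpace

lemma key_inner_pos {E : Type*} [NormedAddCommGroup E] [InnerProductSpace ℝ E]
    (x y p : E) (hx : ‖x‖ = 1) (hy : ‖y‖ = 1) (hp : ‖p‖ = 1)
    (s c : ℝ) (hc : 0 < c) (hs : 0 ≤ s) (hsc : c ^ 2 + s ^ 2 = 1)
    (hyp : c ≤ ⟪y, p⟫) (hxp : s < ⟪x, p⟫) : 0 < ⟪y, x⟫ := by
  set a := ⟪y, p⟫ with ha
  set b := ⟪x, p⟫ with hb
  have hpp : ⟪p, p⟫ = (1 : ℝ) := by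
    rw [real_inner_self_eq_norm_sq, hp]; norm_num
  have hpx : ⟪p, x⟫ = b := (real_inner_comm p x).symm
  have hpy : ⟪p, y⟫ = a := (real_inner_comm p y).symm
  have hexp : ⟪y - a • p, x - b • p⟫ = ⟪y, x⟫ - a * b := by
    rw [inner_sub_left, inner_sub_right, inner_sub_right, real_inner_smul_right,
      real_inner_smul_left, real_inner_smul_left, real_inner_smul_right, hpp, hpx, ← ha]
    ring
  have hny : ‖y - a • p‖ ^ 2 = 1 - a ^ 2 := by
    rw [norm_sub_sq_real, real_inner_smul_right, norm_smul, hy, hp]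
    simp [Real.norm_eq_abs, sq_abs]
    ring
  have hnx : ‖x - b • p‖ ^ 2 = 1 - b ^ 2 := by
    rw [norm_sub_sq_real, real_inner_smul_right, norm_smul, hx, hp]
    simp [Real.norm_eq_abs, sq_abs]
    ring
  have hcs : |⟪y - a • p, x - b • p⟫| ≤ ‖y - a • p‖ * ‖x - b • p‖ :=
    abs_real_inner_le_norm _ _
  have h1 : ‖y - a • p‖ ≤ s := by
    have h : ‖y - a • p‖ ^ 2 ≤ s ^ 2 := by rw [hny]; nlinarith
    nlinarith [norm_nonneg (y - a • p)]
  have h2 : ‖x - b • p‖ ≤ c := by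
    have h : ‖x - b • p‖ ^ 2 ≤ c ^ 2 := by rw [hnx]; nlinarith
    nlinarith [norm_nonneg (x - b • p)]
  have habs : |⟪y, x⟫ - a * b| ≤ s * c := by
    rw [← hexp]
    calc |⟪y - a • p, x - b • p⟫| ≤ ‖y - a • p‖ * ‖x - b • p‖ := hcs
      _ ≤ s * c := mul_le_mul h1 h2 (norm_nonneg _) hs
  have hab : c * s < a * b := by nlinarith
  have h3 := abs_le.mp habs
  nlinarith [h3.1, h3.2]

/-- If a collection of closed caps `D i` of radii `α i ∈ (0, π/2)` centered at `p i`
is non-separable, then for any signs `ε i ∈ {±1}` that are not all equal, the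
intersection of the (possibly antipodally reflected) open polar caps
`ε i • D i' = {x ∈ S | ⟪x, ε i • p i⟫ > cos (π/2 - α i)}` is empty. -/
theorem polar_caps_inter_empty_of_nonseparable (d n : ℕ)
    (p : Fin n → EuclideanSpace ℝ (Fin (d + 1))) (hp : ∀ i, ‖p i‖ = 1)
    (α : Fin n → ℝ) (hα : ∀ i, 0 < α i) (hα' : ∀ i, α i < π / 2)
    (D : Fin n → Set (EuclideanSpace ℝ (Fin (d + 1))))
    (hD : ∀ i, D i = {x | ‖x‖ = 1 ∧ cos (α i) ≤ ⟪x, p i⟫})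
    (hns : ¬ ∃ v : EuclideanSpace ℝ (Fin (d + 1)), v ≠ 0 ∧
      (∀ i, ∀ x ∈ D i, ⟪x, v⟫ ≠ 0) ∧
      (∃ i, D i ⊆ {x | 0 < ⟪x, v⟫}) ∧
      (∃ j, D j ⊆ {x | ⟪x, v⟫ < 0})) :
    ∀ ε : Fin n → ℝ, (∀ i, ε i = 1 ∨ ε i = -1) → (∃ i j, ε i ≠ ε j) →
      (⋂ i, {x : EuclideanSpace ℝ (Fin (d + 1)) |
        ‖x‖ = 1 ∧ cos (π / 2 - α i) < ⟪x, ε i • p i⟫}) = ∅ := by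
  intro ε hε hne
  by_contra h
  obtain ⟨x, hx⟩ := Set.nonempty_iff_ne_empty.mpr h
  simp only [Set.mem_iInter, Set.mem_setOf_eq] at hx
  obtain ⟨i, j, hij⟩ := hne
  have hxnorm : ‖x‖ = 1 := (hx i).1
  -- basic trig facts
  have hcpos : ∀ k, 0 < cos (α k) := fun k =>
    Real.cos_pos_of_mem_Ioo ⟨by linarith [hα k, Real.pi_pos], hα' k⟩
  have hsnn : ∀ k, 0 ≤ sin (α k) := fun k =>
    Real.sin_nonneg_of_nonneg_of_le_pi (le_of_lt (hα k))
      (by linarith [hα' k, Real.pi_pos])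
  have hsq : ∀ k, cos (α k) ^ 2 + sin (α k) ^ 2 = 1 := fun k =>
    Real.cos_sq_add_sin_sq (α k)
  have hxk : ∀ k, sin (α k) < ε k * ⟪x, p k⟫ := by
    intro k
    have := (hx k).2
    rwa [Real.cos_pi_div_two_sub, real_inner_smul_right] at this
  -- positive / negative separation
  have hpos : ∀ k, ε k = 1 → ∀ y ∈ D k, 0 < ⟪y, x⟫ := by
    intro k hk y hy
    rw [hD k] at hy
    have hxpk : sin (α k) < ⟪x, p k⟫ := by
      have := hxk k; rwa [hk, one_mul] at this
    exact key_inner_pos x y (p k) hxnorm hy.1 (hp k) (sin (α k)) (cos (α k))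
      (hcpos k) (hsnn k) (hsq k) hy.2 hxpk
  have hneg : ∀ k, ε k = -1 → ∀ y ∈ D k, ⟪y, x⟫ < 0 := by
    intro k hk y hy
    rw [hD k] at hy
    have hxpk : sin (α k) < ⟪-x, p k⟫ := by
      have := hxk k; rw [hk] at this
      rwa [inner_neg_left, ← neg_one_mul]
    have := key_inner_pos (-x) y (p k) (by simpa using hxnorm) hy.1 (hp k)
      (sin (α k)) (cos (α k)) (hcpos k) (hsnn k) (hsq k) hy.2 hxpk
    rw [inner_neg_right] at this
    linarith
  -- indices of each sign
  have hsigns : (∃ k, ε k = 1) ∧ (∃ k, ε k = -1) := by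
    rcases hε i with h1 | h1 <;> rcases hε j with h2 | h2
    · exact absurd (h1.trans h2.symm) hij
    · exact ⟨⟨i, h1⟩, ⟨j, h2⟩⟩
    · exact ⟨⟨j, h2⟩, ⟨i, h1⟩⟩
    · exact absurd (h1.trans h2.symm) hij
  obtain ⟨⟨ip, hip⟩, ⟨im, him⟩⟩ := hsigns
  apply hns
  refine ⟨x, ?_, ?_, ⟨ip, fun y hy => hpos ip hip y hy⟩,
    ⟨im, fun y hy => hneg im him y hy⟩⟩
  · intro h0
    rw [h0, norm_zero] at hxnorm
    norm_num at hxnorm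
  · intro k y hy
    rcases hε k with hk | hk
    · exact ne_of_gt (hpos k hk y hy)
    · exact ne_of_lt (hneg k hk y hy)
end

section
/- Let w_1, …, w_n be nonzero vectors in ℝ^(d+1), let L be their Bang set, let w ∈ L have maximum norm among the elements of L with |w| < 1, and for x ∈ L set A_x = {t ∈ B : |t + x − y| ≤ |t| for all y ∈ L}, where B is the open unit ball. Let P_i = {y : |⟨y, w_i⟩| < ⟨w_i, w_i⟩} and let Z_i be the closure of S ∩ P_i, where S is the unit sphere. If S \ (Z_1 ∪ … ∪ Z_n) has at most two connected components, then A_x = ∅ for every x ∈ L with x ≠ w and x ≠ −w. -/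
open Real
open scoped RealInnerProductSpace

private lemma flip_aux {E : Type*} [NormedAddCommGroup E] [InnerProductSpace ℝ E]
    {n : ℕ} (w' : Fin n → E) (δ : Fin n → ℝ) (hδ : ∀ i, δ i = 1 ∨ δ i = -1)
    (L : Set E)
    (hL : L = {y | ∃ δ : Fin n → ℝ, (∀ i, δ i = 1 ∨ δ i = -1) ∧ y = ∑ i, δ i • w' i})
    (t : E) (ht : ∀ y ∈ L, ‖t + (∑ i, δ i • w' i) - y‖ ≤ ‖t‖) (i : Fin n) :
    δ i * ⟪t, w' i⟫ ≤ -‖w' i‖ ^ 2 := by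
  classical
  set y : E := ∑ j, Function.update δ i (-δ i) j • w' j with hy
  have hyL : y ∈ L := by
    rw [hL]
    refine ⟨Function.update δ i (-δ i), fun j => ?_, rfl⟩
    rcases eq_or_ne j i with rfl | hj
    · rcases hδ j with h | h <;> simp [h]
    · simpa [Function.update_of_ne hj] using hδ j
  have hterm : ∀ j, δ j • w' j - Function.update δ i (-δ i) j • w' j
      = (if j = i then (2 * δ i) • w' i else 0) := by
    intro j
    rcases eq_or_ne j i with rfl | hj
    · rw [Function.update_self, if_pos rfl, ← sub_smul]
      ring_nf
    · rw [Function.update_of_ne hj, if_neg hj, sub_self]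
  have hdiff : (∑ j, δ j • w' j) - y = (2 * δ i) • w' i := by
    rw [hy, ← Finset.sum_sub_distrib]
    simp_rw [hterm]
    simp
  have h1 : ‖t + (2 * δ i) • w' i‖ ≤ ‖t‖ := by
    have := ht y hyL
    rwa [add_sub_assoc, hdiff] at this
  have h2 : ‖t + (2 * δ i) • w' i‖ ^ 2 ≤ ‖t‖ ^ 2 :=
    pow_le_pow_left₀ (norm_nonneg _) h1 2
  rw [norm_add_sq_real, real_inner_smul_right, norm_smul, mul_pow] at h2
  have habs : ‖(2 * δ i : ℝ)‖ ^ 2 = 4 := by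
    rcases hδ i with h | h <;> rw [h] <;> norm_num
  rw [habs] at h2
  linarith

private lemma sign_const_aux {E : Type*} [NormedAddCommGroup E] [InnerProductSpace ℝ E]
    (S' : Set E) (v : E) (hv : ∀ u ∈ S', ⟪u, v⟫ ≠ 0)
    (a b : E) (ha : a ∈ S') (hb : b ∈ S')
    (h : connectedComponentIn S' a = connectedComponentIn S' b)
    (da db : ℝ) (hda : da = 1 ∨ da = -1) (hdb : db = 1 ∨ db = -1)
    (hsa : da * ⟪a, v⟫ < 0) (hsb : db * ⟪b, v⟫ < 0) : da = db := by
  have haC : a ∈ connectedComponentIn S' a := mem_connectedComponentIn ha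
  have hbC : b ∈ connectedComponentIn S' a := by
    rw [h]; exact mem_connectedComponentIn hb
  have hCsub : connectedComponentIn S' a ⊆ S' := connectedComponentIn_subset _ _
  have hCpre : IsPreconnected (connectedComponentIn S' a) :=
    isPreconnected_connectedComponentIn
  have hf : ContinuousOn (fun u : E => ⟪u, v⟫) (connectedComponentIn S' a) :=
    (continuous_id.inner continuous_const).continuousOn
  have hiv1 := hCpre.intermediate_value haC hbC hf
  have hiv2 := hCpre.intermediate_value hbC haC hf
  rcases hda with h1 | h1 <;> rcases hdb with h2 | h2 <;> subst h1 <;> subst h2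
  · rfl
  · exfalso
    have h0 : (0 : ℝ) ∈ Set.Icc (⟪a, v⟫) (⟪b, v⟫) :=
      Set.mem_Icc.mpr ⟨by linarith, by linarith⟩
    obtain ⟨u, huC, hu⟩ := hiv1 h0
    exact hv u (hCsub huC) hu
  · exfalso
    have h0 : (0 : ℝ) ∈ Set.Icc (⟪b, v⟫) (⟪a, v⟫) :=
      Set.mem_Icc.mpr ⟨by linarith, by linarith⟩
    obtain ⟨u, huC, hu⟩ := hiv2 h0
    exact hv u (hCsub huC) hu
  · rfl

/-- Claim (2) in the proof of Theorem 6: if `w` has maximum norm in the Bang set `L`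
of `w₁, …, wₙ`, with `‖w‖ < 1`, and the complement in the unit sphere of the union of
the zones `Z i = closure (S ∩ P i)` has at most two connected components, then
`A x = ∅` for every `x ∈ L` other than `±w`, where
`A x = {t ∈ B | ‖t + x - y‖ ≤ ‖t‖ for all y ∈ L}`. -/
theorem bang_cells_empty (d n : ℕ)
    (w' : Fin n → EuclideanSpace ℝ (Fin (d + 1))) (hw' : ∀ i, w' i ≠ 0)
    (L : Set (EuclideanSpace ℝ (Fin (d + 1))))
    (hL : L = {y | ∃ δ : Fin n → ℝ, (∀ i, δ i = 1 ∨ δ i = -1) ∧ y = ∑ i, δ i • w' i})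
    (w : EuclideanSpace ℝ (Fin (d + 1))) (hwL : w ∈ L)
    (hmax : ∀ y ∈ L, ‖y‖ ≤ ‖w‖) (hw1 : ‖w‖ < 1)
    (Z : Fin n → Set (EuclideanSpace ℝ (Fin (d + 1))))
    (hZ : ∀ i, Z i = closure ({x : EuclideanSpace ℝ (Fin (d + 1)) | ‖x‖ = 1} ∩
      {y | |⟪y, w' i⟫| < ⟪w' i, w' i⟫}))
    (A : EuclideanSpace ℝ (Fin (d + 1)) → Set (EuclideanSpace ℝ (Fin (d + 1))))
    (hA : ∀ x, A x = {t | t ∈ Metric.ball (0 : EuclideanSpace ℝ (Fin (d + 1))) 1 ∧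
      ∀ y ∈ L, ‖t + x - y‖ ≤ ‖t‖})
    (hcomp : ∃ C₁ C₂ : Set (EuclideanSpace ℝ (Fin (d + 1))),
      ∀ x ∈ ({y : EuclideanSpace ℝ (Fin (d + 1)) | ‖y‖ = 1} \ ⋃ i, Z i),
        connectedComponentIn ({y : EuclideanSpace ℝ (Fin (d + 1)) | ‖y‖ = 1} \ ⋃ i, Z i) x = C₁ ∨
        connectedComponentIn ({y : EuclideanSpace ℝ (Fin (d + 1)) | ‖y‖ = 1} \ ⋃ i, Z i) x = C₂) :
    ∀ x ∈ L, x ≠ w → x ≠ -w → A x = ∅ := by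
  intro x hxL hxw hxw'
  -- the Bang set and its elements
  obtain ⟨δx, hδx, hxrep⟩ := hL ▸ hxL
  obtain ⟨δw, hδw, hwrep⟩ := hL ▸ hwL
  -- the case n = 0 is trivial
  rcases Nat.eq_zero_or_pos n with hn | hn
  · exfalso
    apply hxw
    subst hn
    simp only [Finset.univ_eq_empty, Finset.sum_empty] at hxrep hwrep
    rw [hxrep, hwrep]
  -- main case
  rw [hA]
  by_contra hne
  obtain ⟨t, htB, htA⟩ := Set.nonempty_iff_ne_empty.mpr hne
  rw [Metric.mem_ball, dist_zero_right] at htB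
  -- w ≠ 0
  have hwne : w ≠ 0 := by
    intro h0
    apply hxw
    have h1 : ‖x‖ ≤ 0 := by
      have := hmax x hxL; rwa [h0, norm_zero] at this
    rw [norm_le_zero_iff.mp h1, h0]
  -- t ≠ 0
  have htne : t ≠ 0 := by
    intro h0
    apply hxw
    have := htA w hwL
    rw [h0, zero_add, norm_zero] at this
    exact sub_eq_zero.mp (norm_le_zero_iff.mp this)
  -- signs for -δw
  have hδw' : ∀ i, (fun i => -δw i) i = 1 ∨ (fun i => -δw i) i = -1 := by
    intro i; rcases hδw i with h | h <;> simp [h]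
  have hsum' : ∑ i, (fun i => -δw i) i • w' i = -w := by
    rw [hwrep, ← Finset.sum_neg_distrib]
    exact Finset.sum_congr rfl fun i _ => by rw [neg_smul]
  -- flip inequalities for the three relevant points
  have h₁ : ∀ i, δw i * ⟪-w, w' i⟫ ≤ -‖w' i‖ ^ 2 := by
    refine flip_aux w' δw hδw L hL (-w) (fun y hy => ?_)
    rw [← hwrep, neg_add_cancel, zero_sub, norm_neg, norm_neg]
    exact hmax y hy
  have h₂ : ∀ i, (fun i => -δw i) i * ⟪w, w' i⟫ ≤ -‖w' i‖ ^ 2 := by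
    refine flip_aux w' (fun i => -δw i) hδw' L hL w (fun y hy => ?_)
    rw [hsum', add_neg_cancel, zero_sub, norm_neg]
    exact hmax y hy
  have h₃ : ∀ i, δx i * ⟪t, w' i⟫ ≤ -‖w' i‖ ^ 2 := by
    refine flip_aux w' δx hδx L hL t (fun y hy => ?_)
    rw [← hxrep]
    exact htA y hy
  -- the complement of the zones on the sphere
  obtain ⟨C₁, C₂, hcc⟩ := hcomp
  set Sc : Set (EuclideanSpace ℝ (Fin (d + 1))) :=
    {y : EuclideanSpace ℝ (Fin (d + 1)) | ‖y‖ = 1} \ ⋃ i, Z i with hSc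
  -- the zones are contained in closed slabs
  have hZsub : ∀ i, Z i ⊆ {y : EuclideanSpace ℝ (Fin (d + 1)) | |⟪y, w' i⟫| ≤ ‖w' i‖ ^ 2} := by
    intro i
    rw [hZ i]
    refine closure_minimal ?_ ?_
    · rintro u ⟨-, hu2⟩
      rw [Set.mem_setOf_eq, real_inner_self_eq_norm_sq] at hu2
      exact le_of_lt hu2
    · have hc : Continuous fun u : EuclideanSpace ℝ (Fin (d + 1)) => |⟪u, w' i⟫| :=
        (continuous_id.inner continuous_const).abs
      exact isClosed_Iic.preimage hc
  -- inner products do not vanish on Sc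
  have hnv : ∀ i, ∀ u ∈ Sc, ⟪u, w' i⟫ ≠ 0 := by
    intro i u hu h0
    apply hu.2
    refine Set.mem_iUnion.mpr ⟨i, ?_⟩
    rw [hZ i]
    apply subset_closure
    refine ⟨hu.1, ?_⟩
    rw [Set.mem_setOf_eq, h0, abs_zero, real_inner_self_eq_norm_sq]
    exact pow_pos (norm_pos_iff.mpr (hw' i)) 2
  -- normalization of good points lands in Sc with the right signs
  have pack : ∀ (u : EuclideanSpace ℝ (Fin (d + 1))) (δ : Fin n → ℝ), ‖u‖ < 1 → u ≠ 0 →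
      (∀ i, δ i = 1 ∨ δ i = -1) → (∀ i, δ i * ⟪u, w' i⟫ ≤ -‖w' i‖ ^ 2) →
      (‖u‖⁻¹ • u ∈ Sc ∧ ∀ i, δ i * ⟪‖u‖⁻¹ • u, w' i⟫ < 0) := by
    intro u δ hu1 hu0 hδ hflip
    have hupos : 0 < ‖u‖ := norm_pos_iff.mpr hu0
    have hinv1 : 1 < ‖u‖⁻¹ := (one_lt_inv₀ hupos).mpr hu1
    have hinv0 : 0 < ‖u‖⁻¹ := inv_pos.mpr hupos
    have hwipos : ∀ i, 0 < ‖w' i‖ ^ 2 := fun i => pow_pos (norm_pos_iff.mpr (hw' i)) 2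
    have hip : ∀ i, ⟪‖u‖⁻¹ • u, w' i⟫ = ‖u‖⁻¹ * ⟪u, w' i⟫ := fun i =>
      real_inner_smul_left _ _ _
    constructor
    · constructor
      · show ‖‖u‖⁻¹ • u‖ = 1
        rw [norm_smul, norm_inv, norm_norm, inv_mul_cancel₀ (ne_of_gt hupos)]
      · intro hmem
        obtain ⟨i, hsi⟩ := Set.mem_iUnion.mp hmem
        have hle := hZsub i hsi
        rw [Set.mem_setOf_eq, hip i, abs_mul, abs_of_pos hinv0] at hle
        have habs : ‖w' i‖ ^ 2 ≤ |⟪u, w' i⟫| := by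
          have := hflip i
          rcases hδ i with h | h <;> rw [h] at this <;>
            [exact le_abs.mpr (Or.inr (by linarith)); exact le_abs.mpr (Or.inl (by linarith))]
        nlinarith [hwipos i]
    · intro i
      rw [hip i]
      have := hflip i
      have := hwipos i
      nlinarith
  obtain ⟨hs₁, hg₁⟩ := pack (-w) δw (by rwa [norm_neg]) (neg_ne_zero.mpr hwne) hδw h₁
  obtain ⟨hs₂, hg₂⟩ := pack w (fun i => -δw i) hw1 hwne hδw' h₂
  obtain ⟨hs₃, hg₃⟩ := pack t δx htB htne hδx h₃
  set s₁ := ‖(-w : EuclideanSpace ℝ (Fin (d + 1)))‖⁻¹ • (-w) with hs1def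
  set s₂ := ‖w‖⁻¹ • w with hs2def
  set s₃ := ‖t‖⁻¹ • t with hs3def
  -- equal components force equal sign patterns
  have keyeq : ∀ (a b : EuclideanSpace ℝ (Fin (d + 1))) (δa δb : Fin n → ℝ),
      a ∈ Sc → b ∈ Sc → (∀ i, δa i = 1 ∨ δa i = -1) → (∀ i, δb i = 1 ∨ δb i = -1) →
      (∀ i, δa i * ⟪a, w' i⟫ < 0) → (∀ i, δb i * ⟪b, w' i⟫ < 0) →
      connectedComponentIn Sc a = connectedComponentIn Sc b → ∀ i, δa i = δb i := by
    intro a b δa δb haS hbS hda hdb hsa hsb hcompeq i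
    exact sign_const_aux Sc (w' i) (hnv i) a b haS hbS hcompeq (δa i) (δb i)
      (hda i) (hdb i) (hsa i) (hsb i)
  -- the three possible coincidences are all absurd
  have e12 : connectedComponentIn Sc s₁ = connectedComponentIn Sc s₂ → False := by
    intro h
    have heq' : δw ⟨0, hn⟩ = -δw ⟨0, hn⟩ :=
      keyeq s₁ s₂ δw (fun i => -δw i) hs₁ hs₂ hδw hδw' hg₁ hg₂ h ⟨0, hn⟩
    rcases hδw ⟨0, hn⟩ with h' | h' <;> rw [h'] at heq' <;> linarith
  have e13 : connectedComponentIn Sc s₁ = connectedComponentIn Sc s₃ → False := by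
    intro h
    have heq := keyeq s₁ s₃ δw δx hs₁ hs₃ hδw hδx hg₁ hg₃ h
    apply hxw
    rw [hxrep, hwrep]
    exact Finset.sum_congr rfl fun i _ => by rw [heq i]
  have e23 : connectedComponentIn Sc s₂ = connectedComponentIn Sc s₃ → False := by
    intro h
    have heq := keyeq s₂ s₃ (fun i => -δw i) δx hs₂ hs₃ hδw' hδx hg₂ hg₃ h
    apply hxw'
    rw [hxrep, ← hsum']
    exact Finset.sum_congr rfl fun i _ => by rw [← heq i]
  -- pigeonhole among at most two components
  have H1 := hcc s₁ hs₁
  have H2 := hcc s₂ hs₂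
  have H3 := hcc s₃ hs₃
  rcases H1 with h1 | h1 <;> rcases H2 with h2 | h2 <;> rcases H3 with h3 | h3
  · exact e12 (h1.trans h2.symm)
  · exact e12 (h1.trans h2.symm)
  · exact e13 (h1.trans h3.symm)
  · exact e23 (h2.trans h3.symm)
  · exact e23 (h2.trans h3.symm)
  · exact e13 (h1.trans h3.symm)
  · exact e12 (h1.trans h2.symm)
  · exact e12 (h1.trans h2.symm)
end

section
/- Let w_1, …, w_n be nonzero vectors in ℝ^(d+1), let L be their Bang set, let w ∈ L have maximum norm among the elements of L, and for x ∈ L set A_x = {t ∈ B : |t + x − y| ≤ |t| for all y ∈ L}, where B is the open unit ball. Assume that A_x = ∅ for every x ∈ L \ {w, −w}. Then for every y ∈ ℝ^(d+1) such that both y − w ∈ B and y + w ∈ B, one has y − x ∈ B for all x ∈ L. -/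
open Real
open scoped RealInnerProductSpace

/-- Claim (3) in the proof of Theorem 6: if `w` has maximum norm in the Bang set `L`
of `w₁, …, wₙ` and `A x = ∅` for all `x ∈ L \ {w, -w}`, where
`A x = {t ∈ B | ‖t + x - y‖ ≤ ‖t‖ for all y ∈ L}` and `B` is the open unit ball,
then whenever `y - w` and `y + w` both lie in `B`, so does `y - x` for every `x ∈ L`. -/
theorem shifts_in_ball (d n : ℕ)
    (w' : Fin n → EuclideanSpace ℝ (Fin (d + 1))) (hw' : ∀ i, w' i ≠ 0)
    (L : Set (EuclideanSpace ℝ (Fin (d + 1))))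
    (hL : L = {y | ∃ δ : Fin n → ℝ, (∀ i, δ i = 1 ∨ δ i = -1) ∧ y = ∑ i, δ i • w' i})
    (w : EuclideanSpace ℝ (Fin (d + 1))) (hwL : w ∈ L)
    (hmax : ∀ y ∈ L, ‖y‖ ≤ ‖w‖)
    (A : EuclideanSpace ℝ (Fin (d + 1)) → Set (EuclideanSpace ℝ (Fin (d + 1))))
    (hA : ∀ x, A x = {t | t ∈ Metric.ball (0 : EuclideanSpace ℝ (Fin (d + 1))) 1 ∧
      ∀ y ∈ L, ‖t + x - y‖ ≤ ‖t‖})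
    (hempty : ∀ x ∈ L, x ≠ w → x ≠ -w → A x = ∅) :
    ∀ y : EuclideanSpace ℝ (Fin (d + 1)),
      y - w ∈ Metric.ball (0 : EuclideanSpace ℝ (Fin (d + 1))) 1 →
      y + w ∈ Metric.ball (0 : EuclideanSpace ℝ (Fin (d + 1))) 1 →
      ∀ x ∈ L, y - x ∈ Metric.ball (0 : EuclideanSpace ℝ (Fin (d + 1))) 1 := by
  classical
  intro y hy1 hy2
  simp only [Metric.mem_ball, dist_zero_right] at hy1 hy2 ⊢
  -- ‖w‖ < 1
  have hw1 : ‖w‖ < 1 := by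
    have h2 : (2 : ℝ) * ‖w‖ = ‖(y + w) - (y - w)‖ := by
      rw [show (y + w) - (y - w) = (2:ℝ) • w by module]
      simp [norm_smul]
    have := norm_sub_le (y + w) (y - w)
    nlinarith
  -- parametrize L by Bool functions
  set F : (Fin n → Bool) → EuclideanSpace ℝ (Fin (d + 1)) :=
    fun b => ∑ i, (if b i then (1:ℝ) else -1) • w' i with hF
  have hFL : ∀ b, F b ∈ L := by
    intro b
    rw [hL]
    exact ⟨fun i => if b i then 1 else -1, fun i => by by_cases h : b i <;> simp [h], rfl⟩
  have hsurj : ∀ x ∈ L, ∃ b, F b = x := by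
    intro x hx
    rw [hL] at hx
    obtain ⟨δ, hδ, rfl⟩ := hx
    refine ⟨fun i => δ i = 1, ?_⟩
    simp only [hF]
    congr 1
    funext i
    rcases hδ i with h | h <;> norm_num [h]
  have hne : (Finset.univ : Finset (Fin n → Bool)).Nonempty := Finset.univ_nonempty
  -- the max-distance function along the segment s • y
  set g : ℝ → ℝ := fun s => Finset.univ.sup' hne (fun b => ‖s • y - F b‖) with hg
  have hgcont : Continuous g := by
    rw [continuous_iff_continuousAt]
    intro x
    exact ContinuousAt.finset_sup'_apply hne fun b _ =>
      (((continuous_id.smul continuous_const).sub continuous_const).norm).continuousAt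
  have hgle : ∀ s x, x ∈ L → ‖s • y - x‖ ≤ g s := by
    intro s x hx
    obtain ⟨b, rfl⟩ := hsurj x hx
    exact Finset.le_sup' (fun b => ‖s • y - F b‖) (Finset.mem_univ b)
  -- bound on distances to ±w along the segment, for s ∈ [0,1]
  have hMw : ∀ s ∈ Set.Icc (0:ℝ) 1, ‖s • y - w‖ < 1 := by
    intro s hs
    have : s • y - w = s • (y - w) + (1 - s) • (-w) := by module
    rw [this]
    have h1 := norm_add_le (s • (y - w)) ((1 - s) • (-w))
    rw [norm_smul, norm_smul, norm_neg, Real.norm_eq_abs, Real.norm_eq_abs] at h1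
    have hs0 : |s| = s := abs_of_nonneg hs.1
    have hs1 : |1 - s| = 1 - s := abs_of_nonneg (by linarith [hs.2])
    rw [hs0, hs1] at h1
    have hkey : s * ‖y - w‖ + (1 - s) * ‖w‖ < 1 := by
      rcases eq_or_lt_of_le hs.1 with h | h
      · rw [← h]; simpa using hw1
      · have h2 : s * ‖y - w‖ < s * 1 := by exact mul_lt_mul_of_pos_left hy1 h
        have h3 : (1 - s) * ‖w‖ ≤ (1 - s) * 1 :=
          mul_le_mul_of_nonneg_left hw1.le (by linarith [hs.2])
        nlinarith
    linarith
  have hMw' : ∀ s ∈ Set.Icc (0:ℝ) 1, ‖s • y + w‖ < 1 := by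
    intro s hs
    have : s • y + w = s • (y + w) + (1 - s) • w := by module
    rw [this]
    have h1 := norm_add_le (s • (y + w)) ((1 - s) • w)
    rw [norm_smul, norm_smul, Real.norm_eq_abs, Real.norm_eq_abs] at h1
    have hs0 : |s| = s := abs_of_nonneg hs.1
    have hs1 : |1 - s| = 1 - s := abs_of_nonneg (by linarith [hs.2])
    rw [hs0, hs1] at h1
    have hkey : s * ‖y + w‖ + (1 - s) * ‖w‖ < 1 := by
      rcases eq_or_lt_of_le hs.1 with h | h
      · rw [← h]; simpa using hw1
      · have h2 : s * ‖y + w‖ < s * 1 := by exact mul_lt_mul_of_pos_left hy2 h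
        have h3 : (1 - s) * ‖w‖ ≤ (1 - s) * 1 :=
          mul_le_mul_of_nonneg_left hw1.le (by linarith [hs.2])
        nlinarith
    linarith
  -- key step: if g s < 1 then the maximizer must be ±w
  have hkey : ∀ s : ℝ, g s < 1 → g s ≤ max ‖s • y - w‖ ‖s • y + w‖ := by
    intro s hs
    obtain ⟨b, -, hb⟩ := Finset.exists_mem_eq_sup' hne (fun b => ‖s • y - F b‖)
    have hb' : g s = ‖s • y - F b‖ := hb
    have htA : (s • y - F b) ∈ A (F b) := by
      rw [hA]
      constructor
      · simp only [Metric.mem_ball, dist_zero_right]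
        rw [← hb']
        exact hs
      · intro y' hy'
        have : s • y - F b + F b - y' = s • y - y' := by abel
        rw [this]
        calc ‖s • y - y'‖ ≤ g s := hgle s y' hy'
          _ = ‖s • y - F b‖ := hb'
    have hne' : (A (F b)).Nonempty := ⟨_, htA⟩
    have hbw : F b = w ∨ F b = -w := by
      by_contra h
      push_neg at h
      exact hne'.ne_empty (hempty (F b) (hFL b) h.1 h.2)
    rcases hbw with h | h
    · rw [hb', h]; exact le_max_left _ _
    · rw [hb', h, sub_neg_eq_add]; exact le_max_right _ _
  -- main claim: g 1 < 1
  suffices hg1 : g 1 < 1 by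
    intro x hx
    calc ‖y - x‖ = ‖(1:ℝ) • y - x‖ := by rw [one_smul]
      _ ≤ g 1 := hgle 1 x hx
      _ < 1 := hg1
  by_contra h1
  push_neg at h1
  -- the set where g reaches 1
  set T : Set ℝ := Set.Icc 0 1 ∩ {s | 1 ≤ g s} with hT
  have hTclosed : IsClosed T := isClosed_Icc.inter (isClosed_le continuous_const hgcont)
  have hTne : T.Nonempty := ⟨1, ⟨le_of_lt one_pos, le_refl 1⟩, h1⟩
  have hTbdd : BddBelow T := ⟨0, fun s hs => hs.1.1⟩
  set s₀ : ℝ := sInf T with hs₀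
  have hs₀T : s₀ ∈ T := hTclosed.csInf_mem hTne hTbdd
  have hg0 : g 0 < 1 := by
    obtain ⟨b, -, hb⟩ := Finset.exists_mem_eq_sup' hne (fun b => ‖(0:ℝ) • y - F b‖)
    have hb' : g 0 = ‖(0:ℝ) • y - F b‖ := hb
    rw [hb', zero_smul, zero_sub, norm_neg]
    exact lt_of_le_of_lt (hmax _ (hFL b)) hw1
  have hs₀pos : 0 < s₀ := by
    rcases lt_or_eq_of_le hs₀T.1.1 with h | h
    · exact h
    · exfalso; rw [← h] at hs₀T; exact absurd hs₀T.2 (not_le.mpr hg0)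
  -- on [0, s₀), g s < 1 so g s ≤ M s
  have hIco : Set.Ico (0:ℝ) s₀ ⊆ {s | g s ≤ max ‖s • y - w‖ ‖s • y + w‖} := by
    intro s hs
    have hs1 : s < 1 := lt_of_lt_of_le hs.2 hs₀T.1.2
    have hgs : g s < 1 := by
      by_contra hc
      push_neg at hc
      have : s₀ ≤ s := csInf_le hTbdd ⟨⟨hs.1, le_of_lt hs1⟩, hc⟩
      exact absurd hs.2 (not_lt.mpr this)
    exact hkey s hgs
  have hCclosed : IsClosed {s : ℝ | g s ≤ max ‖s • y - w‖ ‖s • y + w‖} := by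
    apply isClosed_le hgcont
    apply Continuous.max
    · exact ((continuous_id.smul continuous_const).sub continuous_const).norm
    · exact ((continuous_id.smul continuous_const).add continuous_const).norm
  have hs₀mem : s₀ ∈ {s : ℝ | g s ≤ max ‖s • y - w‖ ‖s • y + w‖} := by
    have hcl : s₀ ∈ closure (Set.Ico (0:ℝ) s₀) := by
      rw [closure_Ico (ne_of_lt hs₀pos)]
      exact ⟨le_of_lt hs₀pos, le_refl _⟩
    exact hCclosed.closure_subset (closure_mono hIco hcl)
  have hlt : max ‖s₀ • y - w‖ ‖s₀ • y + w‖ < 1 :=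
    max_lt (hMw s₀ hs₀T.1) (hMw' s₀ hs₀T.1)
  exact absurd (lt_of_le_of_lt hs₀mem hlt) (not_lt.mpr hs₀T.2)
end

section
/- Let w_1, …, w_n be nonzero vectors in ℝ^(d+1), let L be their Bang set, let w ∈ L have maximum norm among the elements of L with |w| < 1, let P_i = {y : |⟨y, w_i⟩| < ⟨w_i, w_i⟩}, and let Z_i be the closure of S ∩ P_i, where S is the unit sphere. For x ∈ L set A_x = {t ∈ B : |t + x − y| ≤ |t| for all y ∈ L}, where B is the open unit ball. If S \ (Z_1 ∪ … ∪ Z_n) has at most two connected components, then A_w = {t ∈ B : ⟨t, −w⟩ ≥ ⟨w, w⟩} = {t ∈ B : |t| ≥ |t + 2w|}. -/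
open Real
open scoped RealInnerProductSpace

lemma norm_add_le_iff_inner {F : Type*} [NormedAddCommGroup F] [InnerProductSpace ℝ F] (x v : F) :
    ‖x + v‖ ≤ ‖x‖ ↔ 2 * ⟪x, v⟫ + ‖v‖ ^ 2 ≤ 0 := by
  constructor
  · intro h
    nlinarith [norm_add_sq_real x v, norm_nonneg (x + v), norm_nonneg x]
  · intro h
    nlinarith [norm_add_sq_real x v, norm_nonneg (x + v), norm_nonneg x]

lemma sum_update_smul {n : ℕ} {E : Type*} [AddCommGroup E] [Module ℝ E]
    (w' : Fin n → E) (δ : Fin n → ℝ) (i : Fin n) (c : ℝ) :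
    ∑ j, (Function.update δ i c) j • w' j = c • w' i + ∑ j ∈ Finset.univ.erase i, δ j • w' j := by
  rw [← Finset.add_sum_erase _ _ (Finset.mem_univ i)]
  congr 1
  · simp
  · exact Finset.sum_congr rfl fun j hj => by rw [Function.update_of_ne (Finset.mem_erase.1 hj).1]

lemma sum_update_smul' {n : ℕ} {E : Type*} [AddCommGroup E] [Module ℝ E]
    (w' : Fin n → E) (δ : Fin n → ℝ) (i : Fin n) :
    ∑ j, (Function.update δ i (-δ i)) j • w' j = (∑ j, δ j • w' j) - (2 * δ i) • w' i := by
  rw [sum_update_smul, ← Finset.add_sum_erase _ (fun j => δ j • w' j) (Finset.mem_univ i)]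
  module


set_option maxHeartbeats 1000000 in
/-- Claim (1) in the proof of Theorem 6: under the hypotheses of the theorem, the
cell `A w` of the maximal element `w` of the Bang set `L` is exactly the part of the
open unit ball `B` cut off by the halfspace `⟪t, -w⟫ ≥ ⟪w, w⟫`, equivalently
`{t ∈ B | ‖t‖ ≥ ‖t + 2w‖}`. -/
theorem bang_cell_eq_halfspace (d n : ℕ)
    (w' : Fin n → EuclideanSpace ℝ (Fin (d + 1))) (hw' : ∀ i, w' i ≠ 0)
    (L : Set (EuclideanSpace ℝ (Fin (d + 1))))
    (hL : L = {y | ∃ δ : Fin n → ℝ, (∀ i, δ i = 1 ∨ δ i = -1) ∧ y = ∑ i, δ i • w' i})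
    (w : EuclideanSpace ℝ (Fin (d + 1))) (hwL : w ∈ L)
    (hmax : ∀ y ∈ L, ‖y‖ ≤ ‖w‖) (hw1 : ‖w‖ < 1)
    (Z : Fin n → Set (EuclideanSpace ℝ (Fin (d + 1))))
    (hZ : ∀ i, Z i = closure ({x : EuclideanSpace ℝ (Fin (d + 1)) | ‖x‖ = 1} ∩
      {y | |⟪y, w' i⟫| < ⟪w' i, w' i⟫}))
    (A : EuclideanSpace ℝ (Fin (d + 1)) → Set (EuclideanSpace ℝ (Fin (d + 1))))
    (hA : ∀ x, A x = {t | t ∈ Metric.ball (0 : EuclideanSpace ℝ (Fin (d + 1))) 1 ∧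
      ∀ y ∈ L, ‖t + x - y‖ ≤ ‖t‖})
    (hcomp : ∃ C₁ C₂ : Set (EuclideanSpace ℝ (Fin (d + 1))),
      ∀ x ∈ ({y : EuclideanSpace ℝ (Fin (d + 1)) | ‖y‖ = 1} \ ⋃ i, Z i),
        connectedComponentIn ({y : EuclideanSpace ℝ (Fin (d + 1)) | ‖y‖ = 1} \ ⋃ i, Z i) x = C₁ ∨
        connectedComponentIn ({y : EuclideanSpace ℝ (Fin (d + 1)) | ‖y‖ = 1} \ ⋃ i, Z i) x = C₂) :
    A w = {t | t ∈ Metric.ball (0 : EuclideanSpace ℝ (Fin (d + 1))) 1 ∧ ⟪w, w⟫ ≤ ⟪t, -w⟫} ∧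
    A w = {t | t ∈ Metric.ball (0 : EuclideanSpace ℝ (Fin (d + 1))) 1 ∧ ‖t + 2 • w‖ ≤ ‖t‖} := by
  classical
  obtain ⟨ε, hε, hwsum⟩ : ∃ ε : Fin n → ℝ, (∀ i, ε i = 1 ∨ ε i = -1) ∧ w = ∑ i, ε i • w' i := by
    rw [hL] at hwL; exact hwL
  have hmem : ∀ δ : Fin n → ℝ, (∀ i, δ i = 1 ∨ δ i = -1) → (∑ i, δ i • w' i) ∈ L := by
    intro δ h; rw [hL]; exact ⟨δ, h, rfl⟩
  have hnegw : -w ∈ L := by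
    have h0 := hmem (fun i => -ε i) (fun i => by rcases hε i with h | h <;> simp [h])
    have h1 : ∑ i, (-ε i) • w' i = -w := by
      rw [hwsum, ← Finset.sum_neg_distrib]
      exact Finset.sum_congr rfl fun i _ => by rw [neg_smul]
    rwa [h1] at h0
  -- algebraic characterization of the cap condition
  have hcap_iff : ∀ t : EuclideanSpace ℝ (Fin (d + 1)), (⟪w, w⟫ ≤ ⟪t, -w⟫) ↔ ‖t + (w + w)‖ ≤ ‖t‖ := by
    intro t
    rw [norm_add_le_iff_inner]
    have h1 : ⟪t, w + w⟫ = 2 * ⟪t, w⟫ := by rw [inner_add_right]; ring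
    have h2 : ‖w + w‖ ^ 2 = 4 * ‖w‖ ^ 2 := by
      rw [← two_smul ℝ w, norm_smul]
      simp [abs_of_nonneg]; ring
    have h3 : ⟪t, -w⟫ = -⟪t, w⟫ := inner_neg_right t w
    have h4 : ⟪w, w⟫ = ‖w‖ ^ 2 := real_inner_self_eq_norm_sq w
    rw [h1, h2, h3, h4]
    constructor <;> intro <;> nlinarith
  have h2smul : ∀ t : EuclideanSpace ℝ (Fin (d + 1)), t + 2 • w = t + (w + w) := fun t => by rw [two_smul]
  -- the heart of the matter
  have hsub : ∀ t : EuclideanSpace ℝ (Fin (d + 1)), ‖t‖ < 1 → ⟪w, w⟫ ≤ ⟪t, -w⟫ →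
      ∀ y ∈ L, ‖t + w - y‖ ≤ ‖t‖ := by
    rcases Nat.eq_zero_or_pos n with hn | hn
    · -- degenerate case n = 0
      haveI : IsEmpty (Fin n) := by rw [hn]; infer_instance
      have hw0 : w = 0 := by rw [hwsum]; simp
      intro t ht1 _ y hy
      rw [hL] at hy
      obtain ⟨δ, -, rfl⟩ := hy
      simp [hw0]
    · -- main case n ≥ 1
      set i₀ : Fin n := ⟨0, hn⟩
      have hwipos : ∀ i, (0 : ℝ) < ‖w' i‖ ^ 2 := fun i => by
        have := norm_pos_iff.2 (hw' i); positivity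
      have hε2 : ∀ i, ε i ^ 2 = 1 := fun i => by rcases hε i with h | h <;> rw [h] <;> norm_num
      -- maximality: flipping one sign cannot increase the norm
      have hFmax : ∀ i, ‖w' i‖ ^ 2 ≤ ε i * ⟪w, w' i⟫ := by
        intro i
        have hy : (∑ j, ε j • w' j) - (2 * ε i) • w' i ∈ L := by
          have h0 := hmem (Function.update ε i (-ε i)) (fun j => by
            rcases eq_or_ne j i with rfl | hj
            · rcases hε j with h | h <;> simp [h]
            · rw [Function.update_of_ne hj]; exact hε j)
          rwa [sum_update_smul'] at h0
        have h5 : ‖w + -((2 * ε i) • w' i)‖ ≤ ‖w‖ := by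
          have := hmax _ hy
          rw [← hwsum] at this
          rwa [← sub_eq_add_neg]
        have h6 := (norm_add_le_iff_inner _ _).1 h5
        rw [inner_neg_right, real_inner_smul_right, norm_neg, norm_smul, Real.norm_eq_abs] at h6
        have h7 : (|2 * ε i| * ‖w' i‖) ^ 2 = 4 * ‖w' i‖ ^ 2 := by
          rw [mul_pow, sq_abs]
          nlinarith [hε2 i]
        nlinarith [hwipos i]
      have hwpos : 0 < ‖w‖ := by
        have h1 : ⟪w, w⟫ = ∑ i, ε i * ⟪w, w' i⟫ := by
          nth_rewrite 2 [hwsum]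
          rw [inner_sum]
          exact Finset.sum_congr rfl fun i _ => real_inner_smul_right _ _ _
        have h2 : 0 < ⟪w, w⟫ := by
          rw [h1]
          refine Finset.sum_pos' (fun i _ => le_trans (sq_nonneg ‖w' i‖) (hFmax i))
            ⟨i₀, Finset.mem_univ _, lt_of_lt_of_le (hwipos i₀) (hFmax i₀)⟩
        refine norm_pos_iff.2 fun h => ?_
        rw [h, inner_zero_left] at h2
        exact lt_irrefl 0 h2
      set U : Set (EuclideanSpace ℝ (Fin (d + 1))) :=
        {y : EuclideanSpace ℝ (Fin (d + 1)) | ‖y‖ = 1} \ ⋃ i, Z i with hUdef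
      have hZsub : ∀ i, Z i ⊆ {x : EuclideanSpace ℝ (Fin (d + 1)) | |⟪x, w' i⟫| ≤ ‖w' i‖ ^ 2} := by
        intro i
        rw [hZ i]
        refine closure_minimal ?_ ?_
        · rintro x ⟨-, hx2⟩
          simp only [Set.mem_setOf_eq] at hx2 ⊢
          rw [real_inner_self_eq_norm_sq] at hx2
          exact le_of_lt hx2
        · exact isClosed_le ((continuous_id.inner continuous_const).abs) continuous_const
      have hU_mem : ∀ x : EuclideanSpace ℝ (Fin (d + 1)), ‖x‖ = 1 →
          (∀ i, ‖w' i‖ ^ 2 < |⟪x, w' i⟫|) → x ∈ U := by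
        intro x hx1 hx2
        refine ⟨hx1, fun hx => ?_⟩
        obtain ⟨i, hi⟩ := Set.mem_iUnion.1 hx
        exact absurd (hZsub i hi) (not_le.2 (hx2 i))
      have hU_ne : ∀ x ∈ U, ∀ i, ⟪x, w' i⟫ ≠ (0 : ℝ) := by
        intro x hx i h0
        refine hx.2 (Set.mem_iUnion.2 ⟨i, ?_⟩)
        rw [hZ i]
        refine subset_closure ⟨hx.1, ?_⟩
        show |⟪x, w' i⟫| < ⟪w' i, w' i⟫
        rw [h0, abs_zero, real_inner_self_eq_norm_sq]
        exact hwipos i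
      have hsign : ∀ C : Set (EuclideanSpace ℝ (Fin (d + 1))), IsPreconnected C → C ⊆ U →
          ∀ v : EuclideanSpace ℝ (Fin (d + 1)), (∀ z ∈ U, ⟪z, v⟫ ≠ (0 : ℝ)) →
          ∀ a ∈ C, ∀ b ∈ C, 0 < ⟪a, v⟫ → 0 < ⟪b, v⟫ := by
        intro C hC hCU v hv a ha b hb hpos
        by_contra hneg
        have hb0 : ⟪b, v⟫ < 0 := lt_of_le_of_ne (not_lt.1 hneg) (hv b (hCU hb))
        obtain ⟨z, hz, hz0⟩ := hC.intermediate_value hb ha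
          ((continuous_id.inner continuous_const).continuousOn) ⟨le_of_lt hb0, le_of_lt hpos⟩
        exact hv z (hCU hz) hz0
      set q : EuclideanSpace ℝ (Fin (d + 1)) := ‖w‖⁻¹ • w with hqdef
      have hwne : w ≠ 0 := norm_pos_iff.1 hwpos
      have hq1 : ‖q‖ = 1 := norm_smul_inv_norm hwne
      have hinv1 : 1 < ‖w‖⁻¹ := one_lt_inv_iff₀.2 ⟨hwpos, hw1⟩
      have hqgt : ∀ i, ‖w' i‖ ^ 2 < ε i * ⟪q, w' i⟫ := by
        intro i
        have h1 : ⟪q, w' i⟫ = ‖w‖⁻¹ * ⟪w, w' i⟫ := real_inner_smul_left _ _ _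
        have h2 := hFmax i
        have h3 := hwipos i
        rw [h1]
        have h4 : ‖w‖⁻¹ * ‖w' i‖ ^ 2 ≤ ‖w‖⁻¹ * (ε i * ⟪w, w' i⟫) :=
          mul_le_mul_of_nonneg_left h2 (by positivity)
        nlinarith
      have hqabs : ∀ i, ‖w' i‖ ^ 2 < |⟪q, w' i⟫| := by
        intro i
        have h1 := hqgt i
        rcases hε i with h | h <;> rw [h] at h1
        · rw [one_mul] at h1
          exact lt_of_lt_of_le h1 (le_abs_self _)
        · refine lt_of_lt_of_le ?_ (neg_le_abs _)
          linarith
      have hqU : q ∈ U := hU_mem q hq1 hqabs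
      have hnqU : -q ∈ U := hU_mem _ (by rw [norm_neg, hq1])
        (fun i => by rw [inner_neg_left, abs_neg]; exact hqabs i)
      obtain ⟨C₁, C₂, hC⟩ := hcomp
      have hεne : ∀ i, ε i ≠ 0 := fun i => by rcases hε i with h | h <;> rw [h] <;> norm_num
      have hvne : ∀ (c : ℝ), c ≠ 0 → ∀ (i : Fin n), ∀ z ∈ U, ⟪z, c • w' i⟫ ≠ (0 : ℝ) := by
        intro c hc i z hz
        rw [real_inner_smul_right]
        exact mul_ne_zero hc (hU_ne z hz i)
      have hposqv : ∀ i, 0 < ⟪q, ε i • w' i⟫ := fun i => by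
        rw [real_inner_smul_right]; nlinarith [hqgt i, hwipos i]
      have hccne : connectedComponentIn U q ≠ connectedComponentIn U (-q) := by
        intro heq
        have hposnq := hsign _ isPreconnected_connectedComponentIn
          (connectedComponentIn_subset U q) _ (hvne (ε i₀) (hεne i₀) i₀) q
          (mem_connectedComponentIn hqU) (-q) (heq ▸ mem_connectedComponentIn hnqU) (hposqv i₀)
        rw [inner_neg_left] at hposnq
        linarith [hposqv i₀]
      have hLemA : ∀ (s : EuclideanSpace ℝ (Fin (d + 1))) (δ : Fin n → ℝ), ‖s‖ < 1 →
          (∀ i, δ i = 1 ∨ δ i = -1) → (∀ i, δ i * ⟪s, w' i⟫ ≤ -‖w' i‖ ^ 2) →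
          (∀ i, δ i = ε i) ∨ (∀ i, δ i = -ε i) := by
        intro s δ hs1 hδ hflip
        have hs0 : s ≠ 0 := by
          intro h
          have h1 := hflip i₀
          rw [h, inner_zero_left, mul_zero] at h1
          nlinarith [hwipos i₀]
        set p := ‖s‖⁻¹ • s with hpdef
        have hp1 : ‖p‖ = 1 := norm_smul_inv_norm hs0
        have hspos : 0 < ‖s‖ := norm_pos_iff.2 hs0
        have hsinv : 1 < ‖s‖⁻¹ := one_lt_inv_iff₀.2 ⟨hspos, hs1⟩
        have hpneg : ∀ i, δ i * ⟪p, w' i⟫ < -‖w' i‖ ^ 2 := by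
          intro i
          have h1 : ⟪p, w' i⟫ = ‖s‖⁻¹ * ⟪s, w' i⟫ := real_inner_smul_left _ _ _
          have h2 := hflip i
          have h3 := hwipos i
          rw [h1]
          have h4 : ‖s‖⁻¹ * (δ i * ⟪s, w' i⟫) ≤ ‖s‖⁻¹ * (-‖w' i‖ ^ 2) :=
            mul_le_mul_of_nonneg_left h2 (by positivity)
          nlinarith
        have hpabs : ∀ i, ‖w' i‖ ^ 2 < |⟪p, w' i⟫| := by
          intro i
          have h1 := hpneg i
          rcases hδ i with h | h <;> rw [h] at h1
          · rw [one_mul] at h1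
            refine lt_of_lt_of_le ?_ (neg_le_abs _)
            linarith
          · refine lt_of_lt_of_le ?_ (le_abs_self _)
            linarith
        have hpU : p ∈ U := hU_mem p hp1 hpabs
        have hpcases : connectedComponentIn U p = connectedComponentIn U q ∨
            connectedComponentIn U p = connectedComponentIn U (-q) := by
          rcases hC p hpU with h1 | h1 <;> rcases hC q hqU with h2 | h2 <;>
            rcases hC (-q) hnqU with h3 | h3 <;>
            first
              | exact Or.inl (h1.trans h2.symm)
              | exact Or.inr (h1.trans h3.symm)
              | exact absurd (h2.trans h3.symm) hccne
        rcases hpcases with hcase | hcase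
        · right
          intro i
          have hposp := hsign _ isPreconnected_connectedComponentIn
            (connectedComponentIn_subset U q) _ (hvne (ε i) (hεne i) i) q
            (mem_connectedComponentIn hqU) p (hcase ▸ mem_connectedComponentIn hpU) (hposqv i)
          rw [real_inner_smul_right] at hposp
          have h1 := hpneg i
          rcases hδ i with h | h <;> rcases hε i with h' | h' <;>
            rw [h] at h1 <;> rw [h'] at hposp <;> rw [h, h'] <;>
            first
              | (exfalso; linarith [hwipos i])
              | linarith [hwipos i]
        · left
          intro i
          have hposnqv : ∀ j, 0 < ⟪-q, (-ε j) • w' j⟫ := fun j => by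
            rw [inner_neg_left, real_inner_smul_right]
            have := hposqv j
            rw [real_inner_smul_right] at this
            nlinarith
          have hposp := hsign _ isPreconnected_connectedComponentIn
            (connectedComponentIn_subset U (-q)) _
            (hvne (-ε i) (neg_ne_zero.2 (hεne i)) i) (-q)
            (mem_connectedComponentIn hnqU) p (hcase ▸ mem_connectedComponentIn hpU) (hposnqv i)
          rw [real_inner_smul_right] at hposp
          have h1 := hpneg i
          rcases hδ i with h | h <;> rcases hε i with h' | h' <;>
            rw [h] at h1 <;> rw [h'] at hposp <;> rw [h, h'] <;>
            first
              | (exfalso; linarith [hwipos i])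
              | linarith [hwipos i]
      have hLfin : L.Finite := by
        have hsubL : L ⊆ (fun δ : Fin n → ℝ => ∑ i, δ i • w' i) ''
            (Set.pi Set.univ fun _ => ({1, -1} : Set ℝ)) := by
          rw [hL]; rintro y ⟨δ, hδ, rfl⟩
          exact ⟨δ, fun i _ => by rcases hδ i with h | h <;> simp [h], rfl⟩
        exact Set.Finite.subset (Set.Finite.image _
          (Set.Finite.pi fun _ => (Set.finite_singleton (-1 : ℝ)).insert _)) hsubL
      set cap : Set (EuclideanSpace ℝ (Fin (d + 1))) :=
        {t | ‖t‖ < 1 ∧ ⟪w, w⟫ ≤ ⟪t, -w⟫} with hcapdef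
      have hcapconv : Convex ℝ cap := by
        have hsplit : cap = {t : EuclideanSpace ℝ (Fin (d + 1)) | ‖t‖ < 1} ∩
            {t : EuclideanSpace ℝ (Fin (d + 1)) | ⟪w, w⟫ ≤ ⟪t, -w⟫} := rfl
        rw [hsplit]
        refine Convex.inter ?_
          (convex_halfSpace_ge
            ⟨fun a b => inner_add_left a b (-w), fun c a => real_inner_smul_left a (-w) c⟩ _)
        simpa [Metric.ball, dist_eq_norm] using
          convex_ball (0 : EuclideanSpace ℝ (Fin (d + 1))) 1
      haveI hpc : PreconnectedSpace cap := Subtype.preconnectedSpace hcapconv.isPreconnected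
      set D : Set (EuclideanSpace ℝ (Fin (d + 1))) :=
        {t | ∀ y ∈ L, ‖t + w - y‖ ≤ ‖t‖} with hDdef
      have hDclosed : IsClosed D := by
        have hD2 : D = ⋂ y ∈ L, {t : EuclideanSpace ℝ (Fin (d + 1)) | ‖t + w - y‖ ≤ ‖t‖} := by
          ext u; simp [hDdef, Set.mem_iInter]
        rw [hD2]
        exact isClosed_biInter fun y _ =>
          isClosed_le (((continuous_id.add continuous_const).sub continuous_const).norm)
            continuous_norm
      have hstrict : ∀ t, t ∈ cap → t ∈ D → ∀ y ∈ L, y ≠ w → y ≠ -w → ‖t + w - y‖ < ‖t‖ := by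
        intro t htc htD y hyL hyw hynw
        rcases lt_or_eq_of_le (htD y hyL) with hlt | heq
        · exact hlt
        exfalso
        rw [hL] at hyL
        obtain ⟨δ, hδ, hyeq⟩ := hyL
        have hδflip : ∀ i, δ i * ⟪t + w - y, w' i⟫ ≤ -‖w' i‖ ^ 2 := by
          intro i
          have hy2 : y - (2 * δ i) • w' i ∈ L := by
            have h0 := hmem (Function.update δ i (-δ i)) (fun j => by
              rcases eq_or_ne j i with rfl | hj
              · rcases hδ j with h | h <;> simp [h]
              · rw [Function.update_of_ne hj]; exact hδ j)
            rw [sum_update_smul'] at h0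
            rwa [← hyeq] at h0
          have h6 : ‖(t + w - y) + (2 * δ i) • w' i‖ ≤ ‖t + w - y‖ := by
            have h7 := htD _ hy2
            have h8 : t + w - (y - (2 * δ i) • w' i) = (t + w - y) + (2 * δ i) • w' i := by
              module
            rw [h8] at h7
            rwa [← heq] at h7
          have h9 := (norm_add_le_iff_inner _ _).1 h6
          rw [real_inner_smul_right, norm_smul, Real.norm_eq_abs] at h9
          have h10 : (|2 * δ i| * ‖w' i‖) ^ 2 = 4 * ‖w' i‖ ^ 2 := by
            rw [mul_pow, sq_abs]
            have hδ2 : δ i ^ 2 = 1 := by rcases hδ i with h | h <;> rw [h] <;> norm_num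
            nlinarith
          nlinarith [hwipos i]
        have hs1 : ‖t + w - y‖ < 1 := by rw [heq]; exact htc.1
        rcases hLemA _ δ hs1 hδ hδflip with hc | hc
        · exact hyw (by rw [hyeq, hwsum]; exact Finset.sum_congr rfl fun i _ => by rw [hc i])
        · refine hynw ?_
          rw [hyeq, hwsum, ← Finset.sum_neg_distrib]
          exact Finset.sum_congr rfl fun i _ => by rw [hc i, neg_smul]
      set Fs : Set cap := {x : cap | (x : EuclideanSpace ℝ (Fin (d + 1))) ∈ D} with hFsdef
      have hFscl : IsClosed Fs := hDclosed.preimage continuous_subtype_val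
      have hFsop : IsOpen Fs := by
        rw [isOpen_iff_forall_mem_open]
        intro x hx
        set W : Set (EuclideanSpace ℝ (Fin (d + 1))) :=
          {u | ‖u‖ < 1} ∩ ⋂ y ∈ (L \ {w, -w} : Set (EuclideanSpace ℝ (Fin (d + 1)))),
            {u | ‖u + w - y‖ < ‖u‖} with hWdef
        have hWopen : IsOpen W := by
          refine IsOpen.inter (isOpen_lt continuous_norm continuous_const) ?_
          exact Set.Finite.isOpen_biInter (hLfin.subset Set.diff_subset) fun y _ =>
            isOpen_lt (((continuous_id.add continuous_const).sub continuous_const).norm)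
              continuous_norm
        refine ⟨Subtype.val ⁻¹' W, ?_, hWopen.preimage continuous_subtype_val, ?_⟩
        · rintro z hz
          show (z : EuclideanSpace ℝ (Fin (d + 1))) ∈ D
          intro y hyL
          by_cases hyw : y = w
          · rw [hyw]
            simp
          by_cases hynw : y = -w
          · rw [hynw, sub_neg_eq_add, add_assoc]
            exact (hcap_iff _).1 z.2.2
          · refine le_of_lt (Set.mem_iInter₂.1 hz.2 y ⟨hyL, fun hmem2 => ?_⟩)
            rcases hmem2 with h | h
            · exact hyw h
            · exact hynw h
        · refine ⟨x.2.1, Set.mem_iInter₂.2 fun y hy => ?_⟩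
          exact hstrict x.1 x.2 hx y hy.1
            (fun h => hy.2 (by rw [h]; exact Set.mem_insert _ _))
            (fun h => hy.2 (by rw [h]; exact Set.mem_insert_of_mem _ rfl))
      have hnegwD : -w ∈ D := by
        intro y hy
        have h1 : -w + w - y = -y := by module
        rw [h1, norm_neg, norm_neg]
        exact hmax y hy
      have hnegwcap : -w ∈ cap := ⟨by rw [norm_neg]; exact hw1, by rw [inner_neg_neg]⟩
      have hFsuniv : Fs = Set.univ :=
        IsClopen.eq_univ ⟨hFscl, hFsop⟩ ⟨⟨-w, hnegwcap⟩, hnegwD⟩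
      intro t ht1 ht2 y hy
      have hmemFs : (⟨t, ht1, ht2⟩ : cap) ∈ Fs := hFsuniv ▸ Set.mem_univ _
      exact hmemFs y hy
  have hAw : A w = {t | t ∈ Metric.ball (0 : EuclideanSpace ℝ (Fin (d + 1))) 1 ∧ ⟪w, w⟫ ≤ ⟪t, -w⟫} := by
    rw [hA]
    ext t
    simp only [Set.mem_setOf_eq, mem_ball_zero_iff]
    constructor
    · rintro ⟨ht1, ht2⟩
      refine ⟨ht1, (hcap_iff t).2 ?_⟩
      have := ht2 _ hnegw
      rwa [sub_neg_eq_add, add_assoc] at this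
    · rintro ⟨ht1, ht2⟩
      exact ⟨ht1, hsub t ht1 ht2⟩
  refine ⟨hAw, ?_⟩
  rw [hAw]
  ext t
  simp only [Set.mem_setOf_eq, h2smul]
  exact and_congr_right fun _ => hcap_iff t
end

section
/- Let w ∈ ℝ^(d+1) be a nonzero vector with |w| < 1, and let A = {t ∈ B : ⟨t, −w⟩ ≥ ⟨w, w⟩}, where B is the open unit ball. Then the image of A under the central projection pr: ℝ^(d+1) \ {0} → S, pr(x) = x/|x|, equals the open spherical cap {x ∈ S : ⟨x, −w/|w|⟩ > |w|} of spherical radius arccos|w| centered at −w/|w|. -/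
open Real
open scoped RealInnerProductSpace

/-- The central projection of `A = {t ∈ B | ⟪t, -w⟫ ≥ ⟪w, w⟫}` onto the unit sphere
is the open spherical cap `{x ∈ S | ⟪x, -w/‖w‖⟫ > ‖w‖}` of spherical radius
`arccos ‖w‖` centered at `-w/‖w‖`. -/
theorem proj_halfspace_cap (d : ℕ)
    (w : EuclideanSpace ℝ (Fin (d + 1))) (hw : w ≠ 0) (hw1 : ‖w‖ < 1) :
    (fun x : EuclideanSpace ℝ (Fin (d + 1)) => ‖x‖⁻¹ • x) ''
        {t | t ∈ Metric.ball (0 : EuclideanSpace ℝ (Fin (d + 1))) 1 ∧ ⟪w, w⟫ ≤ ⟪t, -w⟫} =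
      {x : EuclideanSpace ℝ (Fin (d + 1)) | ‖x‖ = 1 ∧ ‖w‖ < ⟪x, -(‖w‖⁻¹ • w)⟫} := by
  have hwpos : (0:ℝ) < ‖w‖ := norm_pos_iff.mpr hw
  have hww : ⟪w, w⟫ = ‖w‖ ^ 2 := real_inner_self_eq_norm_sq w
  ext x
  simp only [Set.mem_image, Set.mem_setOf_eq, Metric.mem_ball, dist_zero_right]
  constructor
  · rintro ⟨t, ⟨ht1, ht2⟩, rfl⟩
    have hpos : (0:ℝ) < ⟪t, -w⟫ := lt_of_lt_of_le (by rw [hww]; positivity) ht2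
    have htne : t ≠ 0 := by
      rintro rfl
      simp at hpos
    have htpos : (0:ℝ) < ‖t‖ := norm_pos_iff.mpr htne
    constructor
    · rw [norm_smul, norm_inv, norm_norm, inv_mul_cancel₀ (ne_of_gt htpos)]
    · have h1 : ⟪(‖t‖⁻¹ • t : EuclideanSpace ℝ (Fin (d+1))), -(‖w‖⁻¹ • w)⟫
          = ‖t‖⁻¹ * (‖w‖⁻¹ * ⟪t, -w⟫) := by
        rw [real_inner_smul_left, inner_neg_right, real_inner_smul_right,
          inner_neg_right]
        ring
      rw [h1]
      have h2 : ‖w‖⁻¹ * ⟪t, -w⟫ ≥ ‖w‖ := by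
        rw [ge_iff_le, le_inv_mul_iff₀ hwpos, ← sq]
        linarith [hww ▸ ht2]
      have h3 : (1:ℝ) < ‖t‖⁻¹ := by
        rw [lt_inv_comm₀ one_pos htpos]; simpa using ht1
      calc ‖w‖ = 1 * ‖w‖ := (one_mul _).symm
        _ < ‖t‖⁻¹ * (‖w‖⁻¹ * ⟪t, -w⟫) := by
            apply mul_lt_mul h3 h2 hwpos (le_of_lt (by positivity))
  · rintro ⟨hx1, hx2⟩
    have hs : ⟪x, -(‖w‖⁻¹ • w)⟫ = ‖w‖⁻¹ * ⟪x, -w⟫ := by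
      rw [inner_neg_right, real_inner_smul_right, inner_neg_right]; ring
    have hs2 : ‖w‖ ^ 2 < ⟪x, -w⟫ := by
      rw [hs] at hx2
      rw [lt_inv_mul_iff₀ hwpos, ← sq] at hx2
      exact hx2
    have hspos : (0:ℝ) < ⟪x, -w⟫ := lt_of_le_of_lt (by positivity) hs2
    set c : ℝ := ‖w‖ ^ 2 / ⟪x, -w⟫ with hc
    have hcpos : 0 < c := by positivity
    have hc1 : c < 1 := by
      rw [hc, div_lt_one hspos]; exact hs2
    refine ⟨c • x, ⟨?_, ?_⟩, ?_⟩
    · rw [norm_smul, hx1, mul_one, Real.norm_eq_abs, abs_of_pos hcpos]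
      exact hc1
    · rw [real_inner_smul_left, hww, hc, div_mul_cancel₀ _ (ne_of_gt hspos)]
    · rw [norm_smul, hx1, mul_one, Real.norm_eq_abs, abs_of_pos hcpos,
        smul_smul, inv_mul_cancel₀ (ne_of_gt hcpos), one_smul]
end

section
/- Let Z_1, …, Z_n ⊆ S be zones of widths 2α_1, …, 2α_n with each 0 < α_i < π/2 and determined by unit vectors u_1, …, u_n, and set w_i = (sin α_i)·u_i. Suppose I ⊆ {1, …, n} is a subset, minimal with respect to inclusion, such that |Σ_{i∈I} w_i| > sin(Σ_{i∈I} α_i) and Σ_{i∈I} α_i ≤ π/2. Then |I| ≥ 2, and the zones Z_i for i ∈ I can be covered by a single zone of width 2·Σ_{i∈I} α_i. -/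
open Real
open scoped RealInnerProductSpace

lemma key_trig_ineq (a c A B : ℝ) (ha0 : 0 ≤ a) (ha : a ≤ sin A)
    (hc : cos B ≤ c) (hc1 : c ≤ 1)
    (hA0 : 0 ≤ A) (hA2 : A ≤ π / 2) (hB0 : 0 ≤ B) (hAB : A + B ≤ π / 2) :
    a * c + Real.sqrt (1 - a ^ 2) * Real.sqrt (1 - c ^ 2) ≤ sin (A + B) := by
  have ha1 : a ≤ 1 := ha.trans (sin_le_one A)
  have hcneg1 : (-1 : ℝ) ≤ c := le_trans (neg_one_le_cos B) hc
  set t := arcsin a with ht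
  set θ := arccos c with hθ
  have hsint : sin t = a := sin_arcsin (by linarith) ha1
  have hcost : cos t = Real.sqrt (1 - a ^ 2) := cos_arcsin a
  have hcosθ : cos θ = c := cos_arccos hcneg1 hc1
  have hsinθ : sin θ = Real.sqrt (1 - c ^ 2) := sin_arccos c
  have hLHS : a * c + Real.sqrt (1 - a ^ 2) * Real.sqrt (1 - c ^ 2) = sin (t + θ) := by
    rw [sin_add, hsint, hcost, hcosθ, hsinθ]
  rw [hLHS]
  have htA : t ≤ A := by
    have := monotone_arcsin ha
    rwa [arcsin_sin (by linarith) hA2] at this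
  have hθB : θ ≤ B := by
    have h1 : arcsin (cos B) ≤ arcsin c := monotone_arcsin hc
    have h2 : arccos (cos B) = B := arccos_cos hB0 (by linarith [pi_pos])
    rw [arccos_eq_pi_div_two_sub_arcsin] at h2
    rw [hθ, arccos_eq_pi_div_two_sub_arcsin]
    linarith
  have ht0 : 0 ≤ t := arcsin_nonneg.2 ha0
  have hθ0 : 0 ≤ θ := arccos_nonneg c
  exact sin_le_sin_of_le_of_le_pi_div_two (by linarith) hAB (by linarith)

set_option maxHeartbeats 1000000 in
/-- The reduction step in the proof of Theorem 6: if `I` is a minimal subset of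
indices with `‖∑ i ∈ I, w i‖ > sin (∑ i ∈ I, α i)`, where `w i = sin (α i) • u i`,
and `∑ i ∈ I, α i ≤ π/2`, then `I` has at least two elements and the zones `Z i`,
`i ∈ I`, can be covered by a single zone of half-width `∑ i ∈ I, α i`. -/
theorem minimal_subset_zones_coverable (d n : ℕ)
    (u : Fin n → EuclideanSpace ℝ (Fin (d + 1))) (hu : ∀ i, ‖u i‖ = 1)
    (α : Fin n → ℝ) (hα : ∀ i, 0 < α i) (hα' : ∀ i, α i < π / 2)
    (w : Fin n → EuclideanSpace ℝ (Fin (d + 1))) (hw : ∀ i, w i = sin (α i) • u i)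
    (I : Finset (Fin n))
    (hI : sin (∑ i ∈ I, α i) < ‖∑ i ∈ I, w i‖)
    (hIsum : ∑ i ∈ I, α i ≤ π / 2)
    (hmin : ∀ J : Finset (Fin n), J ⊂ I → J.Nonempty →
      ¬ sin (∑ i ∈ J, α i) < ‖∑ i ∈ J, w i‖) :
    2 ≤ I.card ∧
    ∃ v : EuclideanSpace ℝ (Fin (d + 1)), ‖v‖ = 1 ∧
      ∀ i ∈ I, {x : EuclideanSpace ℝ (Fin (d + 1)) | ‖x‖ = 1 ∧ |⟪x, u i⟫| ≤ sin (α i)} ⊆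
        {x : EuclideanSpace ℝ (Fin (d + 1)) | ‖x‖ = 1 ∧ |⟪x, v⟫| ≤ sin (∑ j ∈ I, α j)} := by
  have hpi := pi_pos
  have hnw : ∀ i, ‖w i‖ = sin (α i) := by
    intro i
    rw [hw i, norm_smul, hu i, mul_one]
    exact abs_of_nonneg (sin_nonneg_of_nonneg_of_le_pi (hα i).le (by linarith [hα' i]))
  -- |I| ≥ 2
  have hcard : 2 ≤ I.card := by
    by_contra h
    push_neg at h
    have h1 : I.card ≤ 1 := by omega
    rcases I.eq_empty_or_nonempty with rfl | ⟨i, hi⟩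
    · simp at hI
    · have hIi : I = {i} := Finset.eq_singleton_iff_unique_mem.mpr
        ⟨hi, fun b hb => Finset.card_le_one.mp h1 b hb i hi⟩
      rw [hIi, Finset.sum_singleton, Finset.sum_singleton, hnw i] at hI
      exact lt_irrefl _ hI
  have hIne : I.Nonempty := Finset.card_pos.mp (by omega)
  set s : EuclideanSpace ℝ (Fin (d + 1)) := ∑ i ∈ I, w i with hs_def
  have hsum_pos : 0 < ∑ i ∈ I, α i := Finset.sum_pos (fun i _ => hα i) hIne
  have hsin_sum_pos : 0 < sin (∑ i ∈ I, α i) :=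
    sin_pos_of_pos_of_lt_pi hsum_pos (by linarith)
  have hs_pos : 0 < ‖s‖ := lt_trans hsin_sum_pos hI
  set v : EuclideanSpace ℝ (Fin (d + 1)) := ‖s‖⁻¹ • s with hv_def
  have hv : ‖v‖ = 1 := by
    rw [hv_def, norm_smul, norm_inv, norm_norm, inv_mul_cancel₀ (ne_of_gt hs_pos)]
  refine ⟨hcard, v, hv, ?_⟩
  intro i hi x hx
  obtain ⟨hx1, hx2⟩ := hx
  refine ⟨hx1, ?_⟩
  -- setup
  set B : ℝ := ∑ j ∈ I.erase i, α j with hB_def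
  have hBA : α i + B = ∑ j ∈ I, α j := Finset.add_sum_erase _ _ hi
  have hB0 : 0 ≤ B := Finset.sum_nonneg (fun j _ => (hα j).le)
  have hB2 : B ≤ π / 2 := by linarith [hα i, hBA, hIsum]
  have hcosB : 0 ≤ cos B := cos_nonneg_of_mem_Icc ⟨by linarith, hB2⟩
  have hsinB : 0 ≤ sin B := sin_nonneg_of_nonneg_of_le_pi hB0 (by linarith)
  set s' : EuclideanSpace ℝ (Fin (d + 1)) := ∑ j ∈ I.erase i, w j with hs'_def
  have hs'eq : s' = s - w i := Finset.sum_erase_eq_sub hi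
  have herane : (I.erase i).Nonempty := by
    rw [← Finset.card_pos, Finset.card_erase_of_mem hi]; omega
  have hs'le : ‖s'‖ ≤ sin B := not_lt.mp (hmin _ (Finset.erase_ssubset hi) herane)
  -- key inner product computation
  have hsinA : 0 < sin (α i) :=
    sin_pos_of_pos_of_lt_pi (hα i) (by linarith [hα' i])
  have hkey : 2 * ⟪w i, s⟫ = ‖s‖ ^ 2 + sin (α i) ^ 2 - ‖s'‖ ^ 2 := by
    have h := @norm_sub_sq_real (EuclideanSpace ℝ (Fin (d + 1))) _ _ s (w i)
    rw [← hs'eq, hnw i] at h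
    have hcomm : ⟪s, w i⟫ = ⟪w i, s⟫ := real_inner_comm (w i) s
    linarith
  have hT : sin (α i + B) < ‖s‖ := by rw [hBA]; exact hI
  have hsub_le : sin (α i - B) ≤ sin (α i + B) := by
    rw [sin_add, sin_sub]
    nlinarith [cos_nonneg_of_mem_Icc (Set.mem_Icc.mpr ⟨by linarith [hα i] , (hα' i).le⟩ :
      α i ∈ Set.Icc (-(π/2)) (π/2))]
  have hcosA : 0 ≤ cos (α i) := cos_nonneg_of_mem_Icc ⟨by linarith [hα i], (hα' i).le⟩
  have hprod : 0 ≤ (‖s‖ - sin (α i + B)) * (‖s‖ - sin (α i - B)) :=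
    mul_nonneg (by linarith) (by linarith)
  have hq : 2 * sin (α i) * cos B * ‖s‖ ≤ ‖s‖ ^ 2 + sin (α i) ^ 2 - sin B ^ 2 := by
    nlinarith [hprod, sin_add (α i) B, sin_sub (α i) B,
      sin_sq_add_cos_sq (α i), sin_sq_add_cos_sq B]
  have hws : ⟪w i, s⟫ = sin (α i) * ⟪u i, s⟫ := by rw [hw i, real_inner_smul_left]
  have hus : cos B * ‖s‖ ≤ ⟪u i, s⟫ := by
    have h2 : sin (α i) * (cos B * ‖s‖) ≤ sin (α i) * ⟪u i, s⟫ := by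
      rw [← hws]
      nlinarith [hs'le, norm_nonneg s']
    exact le_of_mul_le_mul_left h2 hsinA
  set c : ℝ := ⟪u i, v⟫ with hc_def
  have hcB : cos B ≤ c := by
    have hvc : c = ‖s‖⁻¹ * ⟪u i, s⟫ := by rw [hc_def, hv_def, real_inner_smul_right]
    have hmul : cos B * ‖s‖ * ‖s‖⁻¹ ≤ ⟪u i, s⟫ * ‖s‖⁻¹ :=
      mul_le_mul_of_nonneg_right hus (by positivity)
    rw [hvc]
    calc cos B = cos B * ‖s‖ * ‖s‖⁻¹ := by field_simp
      _ ≤ ⟪u i, s⟫ * ‖s‖⁻¹ := hmul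
      _ = ‖s‖⁻¹ * ⟪u i, s⟫ := mul_comm _ _
  have hc1 : c ≤ 1 := by
    have h := real_inner_le_norm (u i) v
    rwa [hu i, hv, one_mul] at h
  have hc0 : 0 ≤ c := le_trans hcosB hcB
  set a' : ℝ := ⟪x, u i⟫ with ha'_def
  -- Cauchy-Schwarz on projections
  have hcs : |⟪x, v⟫ - a' * c| ≤ Real.sqrt (1 - a' ^ 2) * Real.sqrt (1 - c ^ 2) := by
    have h1 : ⟪x - a' • u i, v - c • u i⟫ = ⟪x, v⟫ - a' * c := by
      have huu : ⟪u i, u i⟫ = 1 := by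
        rw [real_inner_self_eq_norm_sq, hu i]; norm_num
      simp only [inner_sub_left, inner_sub_right, real_inner_smul_left,
        real_inner_smul_right, huu]
      rw [← hc_def, ← ha'_def]; ring
    have h2 : ‖x - a' • u i‖ ^ 2 = 1 - a' ^ 2 := by
      rw [norm_sub_sq_real, hx1, norm_smul, hu i, real_inner_smul_right, ← ha'_def,
        mul_one, Real.norm_eq_abs, sq_abs]
      ring
    have h3 : ‖v - c • u i‖ ^ 2 = 1 - c ^ 2 := by
      rw [norm_sub_sq_real, hv, norm_smul, hu i, real_inner_smul_right,
        (real_inner_comm v (u i)).symm, ← hc_def, mul_one, Real.norm_eq_abs, sq_abs]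
      ring
    have h4 : ‖x - a' • u i‖ = Real.sqrt (1 - a' ^ 2) := by
      rw [← h2, Real.sqrt_sq (norm_nonneg _)]
    have h5 : ‖v - c • u i‖ = Real.sqrt (1 - c ^ 2) := by
      rw [← h3, Real.sqrt_sq (norm_nonneg _)]
    calc |⟪x, v⟫ - a' * c| = |⟪x - a' • u i, v - c • u i⟫| := by rw [h1]
      _ ≤ ‖x - a' • u i‖ * ‖v - c • u i‖ := abs_real_inner_le_norm _ _
      _ = Real.sqrt (1 - a' ^ 2) * Real.sqrt (1 - c ^ 2) := by rw [h4, h5]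
  have hbound : |⟪x, v⟫| ≤ |a'| * c + Real.sqrt (1 - a' ^ 2) * Real.sqrt (1 - c ^ 2) := by
    calc |⟪x, v⟫| = |a' * c + (⟪x, v⟫ - a' * c)| := by ring_nf
      _ ≤ |a' * c| + |⟪x, v⟫ - a' * c| := abs_add_le _ _
      _ ≤ |a'| * c + Real.sqrt (1 - a' ^ 2) * Real.sqrt (1 - c ^ 2) := by
          rw [abs_mul, abs_of_nonneg hc0]
          linarith [hcs]
  have hfin : |a'| * c + Real.sqrt (1 - |a'| ^ 2) * Real.sqrt (1 - c ^ 2)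
      ≤ sin (α i + B) :=
    key_trig_ineq |a'| c (α i) B (abs_nonneg _) hx2 hcB hc1 (hα i).le (hα' i).le hB0
      (by rw [hBA]; exact hIsum)
  rw [sq_abs] at hfin
  calc |⟪x, v⟫| ≤ |a'| * c + Real.sqrt (1 - a' ^ 2) * Real.sqrt (1 - c ^ 2) := hbound
    _ ≤ sin (α i + B) := hfin
    _ = sin (∑ j ∈ I, α j) := by rw [hBA]
end
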